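/- arXiv:2405.06878 — 3 statements merged into one kernel-verified Lean document; each statement's English description precedes it below -/
import Mathlib

section
/- Let T > 0, let c ∈ L∞((0,T)×Ω) and let u ∈ C¹([0,T]×[l₁,l₂]) satisfy u_t(t,x) ≥ d∫_Ω J(x−y)(u(t,y) − u(t,x))dy − q u_x(t,x) + c(t,x)u(t,x) for all (t,x) ∈ (0,T)×Ω, u(t,l₁) ≥ 0 for all t ∈ (0,T), and u(0,x) = u₀(x) ≥ 0 on [l₁,l₂]. Then u(t,x) ≥ 0 on [0,T]×[l₁,l₂]; moreover, if u₀ ≢ 0 on [l₁,l₂], then u(t,x) > 0 for all (t,x) ∈ (0,T]×(l₁,l₂]. -/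
/-!
Since `c u ≥ -C |u|`, `u` is a supersolution of
`u_t + q u_x = d ∫_Ω J(x-y)(u(t,y) - u(t,x)) dy - C |u|`.

Nonnegativity: if `u` is somewhere negative, the minimum `m < 0` of `e^{-(C+1)t} u` over
`[0,T] × [l₁,l₂]` is attained, by the initial and boundary conditions, at a point of
`(0,T] × (l₁,l₂]`. There the nonnegative function `u - m e^{(C+1)t}` vanishes, so its
derivative in the inward direction `-(1,q)` is nonnegative, i.e. `u_t + q u_x ≤ (C+1) u`, and
the nonlocal term is nonnegative. The inequality, extended to the closed rectangle by
continuity, gives `u_t + q u_x ≥ C u` there, contradicting `u < 0`.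

Positivity: once `u ≥ 0`, `e^{κt} u` is nondecreasing along each characteristic `x - qt = const`,
and increases strictly while `u > 0` somewhere within the distance `δ` (on which `J ≥ J(0)/2`)
of the characteristic. This carries positivity from a point where `u₀ > 0` forward in time, and
then in steps of `δ/2` across `(l₁,l₂]`.
-/

open MeasureTheory Set Filter Topology Function

theorem IsPreconnected.forall_of_dist_lt_imp {X : Type*} [PseudoMetricSpace X]
    {s : Set X} (hs : IsPreconnected s) {P : X → Prop} {h : ℝ} (hh : 0 < h)
    (hstep : ∀ x ∈ s, ∀ y ∈ s, dist x y < h → P x → P y) {a : X} (ha : a ∈ s) (hPa : P a) :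
    ∀ y ∈ s, P y := by
  refine fun y hy => hs.induction₂' (fun x y => P x → P y) (fun x hx => ?_)
    (fun _ _ _ _ _ _ hxy hyz => hyz ∘ hxy) ha hy hPa
  filter_upwards [nhdsWithin_le_nhds (Metric.ball_mem_nhds x hh), self_mem_nhdsWithin]
    with z hz hzs
  exact ⟨hstep x hx z hzs (dist_comm x z ▸ hz), hstep z hzs x hx hz⟩

theorem neg_mem_posTangentConeAt_Icc_prod {a b c e t x q : ℝ} (ht : t ∈ Ioc a b)
    (hx : x ∈ Ioc c e) (hq : 0 ≤ q) :
    -((1 : ℝ), q) ∈ posTangentConeAt (Icc a b ×ˢ Icc c e) (t, x) := by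
  refine mem_posTangentConeAt_of_frequently_mem (Eventually.frequently ?_)
  have hqs : Tendsto (fun s : ℝ => q * s) (𝓝[>] 0) (𝓝 0) := by
    simpa using ((continuous_const_mul q).tendsto 0).mono_left nhdsWithin_le_nhds
  filter_upwards [nhdsWithin_le_nhds (eventually_lt_nhds (sub_pos.2 ht.1)),
    hqs.eventually (eventually_lt_nhds (sub_pos.2 hx.1)), self_mem_nhdsWithin] with s h1 h2 h3
  simp only [Prod.smul_mk, Prod.neg_mk, Prod.mk_add_mk, smul_eq_mul, mem_prod, mem_Icc]
  refine ⟨⟨?_, ?_⟩, ?_, ?_⟩ <;> nlinarith [ht.2, hx.2, show (0 : ℝ) < s from h3]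

theorem ContDiffOn.hasFDerivAt_fderivWithin {E F : Type*} [NormedAddCommGroup E]
    [NormedSpace ℝ E] [NormedAddCommGroup F] [NormedSpace ℝ F] {f : E → F} {s : Set E} {x : E}
    (hf : ContDiffOn ℝ 1 f s) (hs : s ∈ 𝓝 x) : HasFDerivAt f (fderivWithin ℝ f s x) x := by
  rw [fderivWithin_of_mem_nhds hs]
  exact ((hf.differentiableOn one_ne_zero).differentiableAt hs).hasFDerivAt

theorem HasFDerivAt.deriv_add_mul_deriv_uncurry {u : ℝ → ℝ → ℝ} {L : ℝ × ℝ →L[ℝ] ℝ}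
    {t x : ℝ} (h : HasFDerivAt (uncurry u) L (t, x)) (q : ℝ) :
    deriv (fun s => u s x) t + q * deriv (u t) x = L (1, q) := by
  have ht : HasDerivAt (fun s => u s x) (L (1, 0)) t :=
    h.comp_hasDerivAt (x := t) (f := fun s => (s, x))
      ((hasDerivAt_id t).prodMk (hasDerivAt_const t x))
  have hx : HasDerivAt (u t) (L (0, 1)) x :=
    h.comp_hasDerivAt (x := x) (f := fun y => (t, y))
      ((hasDerivAt_const x t).prodMk (hasDerivAt_id x))
  rw [ht.deriv, hx.deriv, ← smul_eq_mul, ← L.map_smul, ← L.map_add]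
  simp

theorem HasFDerivAt.hasDerivAt_uncurry_characteristic {u : ℝ → ℝ → ℝ}
    {L : ℝ × ℝ →L[ℝ] ℝ} {q t x s : ℝ} (h : HasFDerivAt (uncurry u) L (s, x - q * (t - s))) :
    HasDerivAt (fun s => u s (x - q * (t - s))) (L (1, q)) s := by
  have hline : HasDerivAt (fun s : ℝ => x - q * (t - s)) q s := by
    simpa using ((hasDerivAt_id s).const_sub t).const_mul q |>.const_sub x
  exact h.comp_hasDerivAt (x := s) (f := fun s => (s, x - q * (t - s)))
    ((hasDerivAt_id s).prodMk hline)

theorem continuous_setIntegral_Ioo_comp_sub {J : ℝ → ℝ} (hJ : Integrable J) {a b : ℝ}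
    (hab : a ≤ b) : Continuous fun x => ∫ y in Ioo a b, J (x - y) := by
  have hii : ∀ c e : ℝ, IntervalIntegrable J volume c e := fun _ _ => hJ.intervalIntegrable
  have hprim := intervalIntegral.continuous_primitive hii 0
  have hW : (fun x => ∫ y in Ioo a b, J (x - y)) =
      fun x => (∫ s in (0:ℝ)..(x - a), J s) - ∫ s in (0:ℝ)..(x - b), J s := by
    funext x
    rw [← integral_Ioc_eq_integral_Ioo, ← intervalIntegral.integral_of_le hab,
      intervalIntegral.integral_comp_sub_left J x,
      ← intervalIntegral.integral_interval_sub_left (hii _ _) (hii _ _)]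
  rw [hW]
  exact (hprim.comp (continuous_id.sub continuous_const)).sub
    (hprim.comp (continuous_id.sub continuous_const))

theorem setIntegral_comp_sub_le_integral {J : ℝ → ℝ} (hJ : Integrable J)
    (hJnn : ∀ x, 0 ≤ J x) (s : Set ℝ) (x : ℝ) : ∫ y in s, J (x - y) ≤ ∫ y, J y := by
  calc ∫ y in s, J (x - y) ≤ ∫ y, J (x - y) :=
        setIntegral_le_integral (hJ.comp_sub_left x) (Eventually.of_forall fun _ => hJnn _)
    _ = ∫ y, J y := integral_sub_left_eq_self J volume x

theorem integrableOn_Ioo_comp_sub_mul {J f : ℝ → ℝ} (hJ : Continuous J) {a b : ℝ}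
    (hf : ContinuousOn f (Icc a b)) (x : ℝ) :
    IntegrableOn (fun y => J (x - y) * f y) (Ioo a b) :=
  (((hJ.comp (continuous_const.sub continuous_id)).continuousOn.mul hf).integrableOn_Icc).mono_set
    Ioo_subset_Icc_self

theorem setIntegral_Ioo_comp_sub_mul_sub {J f : ℝ → ℝ} (hJ : Continuous J) {a b : ℝ}
    (hf : ContinuousOn f (Icc a b)) (x : ℝ) :
    ∫ y in Ioo a b, J (x - y) * (f y - f x) =
      (∫ y in Ioo a b, J (x - y) * f y) - f x * ∫ y in Ioo a b, J (x - y) := by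
  simp_rw [mul_sub]
  rw [integral_sub (integrableOn_Ioo_comp_sub_mul hJ hf x)
    (integrableOn_Ioo_comp_sub_mul hJ continuousOn_const x), integral_mul_const, mul_comm]

theorem mul_sub_le_setIntegral_Ioo {g : ℝ → ℝ} {a b c e μ : ℝ}
    (hg : IntegrableOn g (Ioo a b)) (hgnn : ∀ y ∈ Ioo a b, 0 ≤ g y) (hce : c ≤ e)
    (hsub : Ioo c e ⊆ Ioo a b) (hlow : ∀ y ∈ Ioo c e, μ ≤ g y) :
    μ * (e - c) ≤ ∫ y in Ioo a b, g y :=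
  calc μ * (e - c) = ∫ _ in Ioo c e, μ := by
        rw [setIntegral_const, Real.volume_real_Ioo_of_le hce, smul_eq_mul, mul_comm]
    _ ≤ ∫ y in Ioo c e, g y :=
        setIntegral_mono_on (integrableOn_const measure_Ioo_lt_top.ne) (hg.mono_set hsub)
          measurableSet_Ioo hlow
    _ ≤ ∫ y in Ioo a b, g y :=
        setIntegral_mono_set hg ((ae_restrict_iff' measurableSet_Ioo).2 (.of_forall hgnn))
          hsub.eventuallyLE

theorem ContinuousOn.nonneg_of_nonneg_Ioo {f : ℝ → ℝ} {a b : ℝ} (hab : a < b)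
    (hf : ContinuousOn f (Icc a b)) (h : ∀ t ∈ Ioo a b, 0 ≤ f t) : ∀ t ∈ Icc a b, 0 ≤ f t :=
  fun t ht => ContinuousWithinAt.closure_le (f := fun _ => 0) (closure_Ioo hab.ne ▸ ht)
    continuousWithinAt_const ((hf t ht).mono Ioo_subset_Icc_self) h

theorem ContinuousOn.exists_mem_Ioc_pos {f : ℝ → ℝ} {a b x : ℝ} (hab : a < b)
    (hf : ContinuousOn f (Icc a b)) (hx : x ∈ Icc a b) (hfx : 0 < f x) :
    ∃ y ∈ Ioc a b, 0 < f y := by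
  have : (𝓝[Ioc a b] x).NeBot :=
    mem_closure_iff_nhdsWithin_neBot.1 (by rwa [closure_Ioc hab.ne])
  obtain ⟨y, hy, hyI⟩ := ((((hf x hx).mono Ioc_subset_Icc_self).eventually
    (eventually_gt_nhds hfx)).and self_mem_nhdsWithin).exists
  exact ⟨y, hyI, hy⟩

theorem IsCompact.exists_mul_exp_fst_le {K : Set (ℝ × ℝ)} (hK : IsCompact K) (hne : K.Nonempty)
    {f : ℝ × ℝ → ℝ} (hf : ContinuousOn f K) (k : ℝ) :
    ∃ p ∈ K, ∃ m, f p = m * Real.exp (k * p.1) ∧ ∀ p' ∈ K, m * Real.exp (k * p'.1) ≤ f p' := by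
  obtain ⟨p, hp, hmin⟩ := hK.exists_isMinOn hne
    ((Real.continuous_exp.comp (continuous_const.mul continuous_fst)).continuousOn.mul hf :
      ContinuousOn (fun p : ℝ × ℝ => Real.exp (-k * p.1) * f p) K)
  set m := Real.exp (-k * p.1) * f p
  refine ⟨p, hp, m, ?_, fun p' hp' => ?_⟩
  · rw [mul_comm, ← mul_assoc, ← Real.exp_add, neg_mul, add_neg_cancel, Real.exp_zero, one_mul]
  · have h : m ≤ Real.exp (-k * p'.1) * f p' := hmin hp'
    rwa [neg_mul, Real.exp_neg, le_inv_mul_iff₀ (Real.exp_pos _), mul_comm] at h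

structure IsDispersalKernel (J : ℝ → ℝ) : Prop where
  continuous : Continuous J
  nonneg : ∀ x, 0 ≤ J x
  integrable : Integrable J

structure IsNonlocalSupersolution (l₁ l₂ d q T C : ℝ) (J : ℝ → ℝ) (u : ℝ → ℝ → ℝ) :
    Prop where
  contDiffOn : ContDiffOn ℝ 1 (uncurry u) (Icc 0 T ×ˢ Icc l₁ l₂)
  le_fderivWithin : ∀ t ∈ Ioo 0 T, ∀ x ∈ Ioo l₁ l₂,
    d * (∫ y in Ioo l₁ l₂, J (x - y) * (u t y - u t x)) - C * |u t x| ≤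
      fderivWithin ℝ (uncurry u) (Icc 0 T ×ˢ Icc l₁ l₂) (t, x) (1, q)

namespace IsNonlocalSupersolution

variable {l₁ l₂ d q T C : ℝ} {J : ℝ → ℝ} {u : ℝ → ℝ → ℝ}

theorem of_le_deriv {c : ℝ → ℝ → ℝ} (hu : ContDiffOn ℝ 1 (uncurry u) (Icc 0 T ×ˢ Icc l₁ l₂))
    (hc : ∀ t ∈ Ioo 0 T, ∀ x ∈ Ioo l₁ l₂, |c t x| ≤ C)
    (hineq : ∀ t ∈ Ioo 0 T, ∀ x ∈ Ioo l₁ l₂,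
      d * (∫ y in Ioo l₁ l₂, J (x - y) * (u t y - u t x)) - q * deriv (u t) x + c t x * u t x ≤
        deriv (fun s => u s x) t) :
    IsNonlocalSupersolution l₁ l₂ d q T C J u := by
  refine ⟨hu, fun t ht x hx => ?_⟩
  have hint : Icc 0 T ×ˢ Icc l₁ l₂ ∈ 𝓝 (t, x) :=
    mem_of_superset ((isOpen_Ioo.prod isOpen_Ioo).mem_nhds ⟨ht, hx⟩)
      (prod_mono Ioo_subset_Icc_self Ioo_subset_Icc_self)
  rw [← (hu.hasFDerivAt_fderivWithin hint).deriv_add_mul_deriv_uncurry q]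
  have hcu : -(C * |u t x|) ≤ c t x * u t x := by
    have := mul_le_mul_of_nonneg_right (hc t ht x hx) (abs_nonneg (u t x))
    rw [← abs_mul] at this
    linarith [neg_abs_le (c t x * u t x)]
  linarith [hineq t ht x hx]

theorem continuousOn_slice (hu : IsNonlocalSupersolution l₁ l₂ d q T C J u) {t : ℝ}
    (ht : t ∈ Icc 0 T) : ContinuousOn (u t) (Icc l₁ l₂) :=
  hu.contDiffOn.continuousOn.comp (f := fun y => (t, y))
    (Continuous.continuousOn (by fun_prop)) fun _ hy => ⟨ht, hy⟩

theorem le_fderivWithin_of_forall_le (hu : IsNonlocalSupersolution l₁ l₂ d q T C J u)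
    (hJ : IsDispersalKernel J) (hl : l₁ < l₂) (hT : 0 < T) (hd : 0 ≤ d) {g : ℝ → ℝ}
    (hg : Continuous g) (hgu : ∀ t ∈ Icc 0 T, ∀ y ∈ Icc l₁ l₂, g t ≤ u t y) :
    ∀ p ∈ Icc 0 T ×ˢ Icc l₁ l₂,
      d * (∫ y in Ioo l₁ l₂, J (p.2 - y)) * (g p.1 - uncurry u p) - C * |uncurry u p| ≤
        fderivWithin ℝ (uncurry u) (Icc 0 T ×ˢ Icc l₁ l₂) p (1, q) := by
  have hK : closure (Ioo 0 T ×ˢ Ioo l₁ l₂) = Icc 0 T ×ˢ Icc l₁ l₂ := by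
    rw [closure_prod_eq, closure_Ioo hT.ne, closure_Ioo hl.ne]
  have hsub : Ioo 0 T ×ˢ Ioo l₁ l₂ ⊆ Icc 0 T ×ˢ Icc l₁ l₂ :=
    prod_mono Ioo_subset_Icc_self Ioo_subset_Icc_self
  have hUc := hu.contDiffOn.continuousOn
  have hlhs : ContinuousOn (fun p : ℝ × ℝ => d * (∫ y in Ioo l₁ l₂, J (p.2 - y)) *
      (g p.1 - uncurry u p) - C * |uncurry u p|) (Icc 0 T ×ˢ Icc l₁ l₂) :=
    ((continuousOn_const.mul ((continuous_setIntegral_Ioo_comp_sub hJ.integrable hl.le).comp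
      continuous_snd).continuousOn).mul ((hg.comp continuous_fst).continuousOn.sub hUc)).sub
      (continuousOn_const.mul hUc.abs)
  have hrhs : ContinuousOn
      (fun p => fderivWithin ℝ (uncurry u) (Icc 0 T ×ˢ Icc l₁ l₂) p (1, q))
      (Icc 0 T ×ˢ Icc l₁ l₂) :=
    (hu.contDiffOn.continuousOn_fderivWithin
      ((uniqueDiffOn_Icc hT).prod (uniqueDiffOn_Icc hl)) le_rfl).clm_apply continuousOn_const
  intro p hp
  refine ContinuousWithinAt.closure_le (hK ▸ hp) ((hlhs p hp).mono hsub)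
    ((hrhs p hp).mono hsub) ?_
  rintro ⟨t, x⟩ ⟨ht, hx⟩
  have htI := Ioo_subset_Icc_self ht
  have hmass : (∫ y in Ioo l₁ l₂, J (x - y)) * g t ≤ ∫ y in Ioo l₁ l₂, J (x - y) * u t y := by
    rw [← integral_mul_const]
    exact setIntegral_mono_on
      (integrableOn_Ioo_comp_sub_mul hJ.continuous continuousOn_const x)
      (integrableOn_Ioo_comp_sub_mul hJ.continuous (hu.continuousOn_slice htI) x)
      measurableSet_Ioo fun y hy =>
        mul_le_mul_of_nonneg_left (hgu t htI y (Ioo_subset_Icc_self hy)) (hJ.nonneg _)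
  have h := hu.le_fderivWithin t ht x hx
  rw [setIntegral_Ioo_comp_sub_mul_sub hJ.continuous (hu.continuousOn_slice htI)] at h
  change d * (∫ y in Ioo l₁ l₂, J (x - y)) * (g t - u t x) - C * |u t x| ≤ _
  nlinarith [mul_le_mul_of_nonneg_left hmass hd]

theorem fderivWithin_le_of_isMinOn (hu : IsNonlocalSupersolution l₁ l₂ d q T C J u) (hq : 0 ≤ q)
    {t x m k : ℝ} (ht : t ∈ Ioc 0 T) (hx : x ∈ Ioc l₁ l₂)
    (hmin : IsMinOn (fun p : ℝ × ℝ => uncurry u p - m * Real.exp (k * p.1))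
      (Icc 0 T ×ˢ Icc l₁ l₂) (t, x)) :
    fderivWithin ℝ (uncurry u) (Icc 0 T ×ˢ Icc l₁ l₂) (t, x) (1, q) ≤
      k * (m * Real.exp (k * t)) := by
  have hU : HasFDerivWithinAt (uncurry u)
      (fderivWithin ℝ (uncurry u) (Icc 0 T ×ˢ Icc l₁ l₂) (t, x)) (Icc 0 T ×ˢ Icc l₁ l₂) (t, x) :=
    (hu.contDiffOn.differentiableOn one_ne_zero _
      (prod_mono Ioc_subset_Icc_self Ioc_subset_Icc_self ⟨ht, hx⟩)).hasFDerivWithinAt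
  have hexp := ((hasFDerivAt_fst (p := (t, x))).const_mul k).exp.const_mul m
  have h := hmin.localize.hasFDerivWithinAt_nonneg (hU.sub hexp.hasFDerivWithinAt)
    (neg_mem_posTangentConeAt_Icc_prod ht hx hq)
  simp only [sub_apply, smul_apply, map_neg, ContinuousLinearMap.coe_fst', smul_eq_mul] at h
  linarith

theorem nonneg (hu : IsNonlocalSupersolution l₁ l₂ d q T C J u) (hJ : IsDispersalKernel J)
    (hl : l₁ < l₂) (hT : 0 < T) (hd : 0 ≤ d) (hq : 0 ≤ q) (hbd : ∀ t ∈ Ioo 0 T, 0 ≤ u t l₁)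
    (hinit : ∀ x ∈ Icc l₁ l₂, 0 ≤ u 0 x) :
    ∀ t ∈ Icc 0 T, ∀ x ∈ Icc l₁ l₂, 0 ≤ u t x := by
  have hUc := hu.contDiffOn.continuousOn
  have hbd' : ∀ t ∈ Icc 0 T, 0 ≤ u t l₁ := ContinuousOn.nonneg_of_nonneg_Ioo hT
    (hUc.comp (f := fun s => (s, l₁)) (Continuous.continuousOn (by fun_prop))
      fun _ hs => ⟨hs, left_mem_Icc.2 hl.le⟩) hbd
  obtain ⟨⟨t₀, x₀⟩, ⟨ht₀, hx₀⟩, m, hu₀, hbarrier⟩ :=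
    (isCompact_Icc.prod isCompact_Icc).exists_mul_exp_fst_le
      ⟨(0, l₁), left_mem_Icc.2 hT.le, left_mem_Icc.2 hl.le⟩ hUc (C + 1)
  change u t₀ x₀ = _ at hu₀
  by_contra hneg
  push Not at hneg
  obtain ⟨t₁, ht₁, x₁, hx₁, hneg⟩ := hneg
  have hm : m < 0 := by
    have : m * Real.exp ((C + 1) * t₁) ≤ u t₁ x₁ := hbarrier (t₁, x₁) ⟨ht₁, hx₁⟩
    nlinarith [Real.exp_pos ((C + 1) * t₁)]
  have hu₀neg : u t₀ x₀ < 0 := hu₀ ▸ mul_neg_of_neg_of_pos hm (Real.exp_pos _)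
  have ht₀pos : 0 < t₀ := by
    refine lt_of_le_of_ne ht₀.1 fun h => ?_
    subst h
    linarith [hinit x₀ hx₀]
  have hx₀pos : l₁ < x₀ := by
    refine lt_of_le_of_ne hx₀.1 fun h => ?_
    subst h
    linarith [hbd' t₀ ht₀]
  have hlower := hu.le_fderivWithin_of_forall_le hJ hl hT hd
    (Real.continuous_exp.comp (continuous_const.mul continuous_id) |>.const_mul m)
    (fun t ht y hy => hbarrier (t, y) ⟨ht, hy⟩) (t₀, x₀) ⟨ht₀, hx₀⟩
  have hupper := hu.fderivWithin_le_of_isMinOn hq ⟨ht₀pos, ht₀.2⟩ ⟨hx₀pos, hx₀.2⟩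
    (m := m) (k := C + 1) fun p hp => by
      change u t₀ x₀ - _ ≤ uncurry u p - _
      linarith [hbarrier p hp]
  change _ * _ * (m * Real.exp ((C + 1) * t₀) - u t₀ x₀) - C * |u t₀ x₀| ≤ _ at hlower
  rw [← hu₀, sub_self, mul_zero, zero_sub, abs_of_neg hu₀neg] at hlower
  rw [← hu₀] at hupper
  linarith

theorem sub_mul_le_fderivWithin (hu : IsNonlocalSupersolution l₁ l₂ d q T C J u)
    (hJ : IsDispersalKernel J) (hnn : ∀ t ∈ Icc 0 T, ∀ x ∈ Icc l₁ l₂, 0 ≤ u t x) {κ : ℝ}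
    (hκW : ∀ x, d * (∫ y in Ioo l₁ l₂, J (x - y)) + C ≤ κ) {t x : ℝ} (ht : t ∈ Ioo 0 T)
    (hx : x ∈ Ioo l₁ l₂) :
    d * (∫ y in Ioo l₁ l₂, J (x - y) * u t y) - κ * u t x ≤
      fderivWithin ℝ (uncurry u) (Icc 0 T ×ˢ Icc l₁ l₂) (t, x) (1, q) := by
  have hux : 0 ≤ u t x := hnn t (Ioo_subset_Icc_self ht) x (Ioo_subset_Icc_self hx)
  have h := hu.le_fderivWithin t ht x hx
  rw [setIntegral_Ioo_comp_sub_mul_sub hJ.continuous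
    (hu.continuousOn_slice (Ioo_subset_Icc_self ht)), abs_of_nonneg hux] at h
  nlinarith [mul_le_mul_of_nonneg_right (hκW x) hux]

theorem hasDerivAt_exp_mul_characteristic (hu : IsNonlocalSupersolution l₁ l₂ d q T C J u)
    {κ t x s : ℝ} (hs : s ∈ Ioo 0 T) (hx : x - q * (t - s) ∈ Ioo l₁ l₂) :
    HasDerivAt (fun s => Real.exp (κ * s) * u s (x - q * (t - s)))
      (κ * Real.exp (κ * s) * u s (x - q * (t - s)) + Real.exp (κ * s) *
        fderivWithin ℝ (uncurry u) (Icc 0 T ×ˢ Icc l₁ l₂) (s, x - q * (t - s)) (1, q)) s := by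
  have hint : Icc 0 T ×ˢ Icc l₁ l₂ ∈ 𝓝 (s, x - q * (t - s)) :=
    mem_of_superset ((isOpen_Ioo.prod isOpen_Ioo).mem_nhds ⟨hs, hx⟩)
      (prod_mono Ioo_subset_Icc_self Ioo_subset_Icc_self)
  have hexp : HasDerivAt (fun s => Real.exp (κ * s)) (κ * Real.exp (κ * s)) s := by
    simpa [mul_comm] using ((hasDerivAt_id s).const_mul κ).exp
  exact hexp.mul
    (hu.contDiffOn.hasFDerivAt_fderivWithin hint).hasDerivAt_uncurry_characteristic

theorem mul_sub_le_exp_mul_sub (hu : IsNonlocalSupersolution l₁ l₂ d q T C J u)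
    (hJ : IsDispersalKernel J) (hq : 0 < q) (hd : 0 ≤ d)
    (hnn : ∀ t ∈ Icc 0 T, ∀ x ∈ Icc l₁ l₂, 0 ≤ u t x) {κ : ℝ} (hκ : 0 ≤ κ)
    (hκW : ∀ x, d * (∫ y in Ioo l₁ l₂, J (x - y)) + C ≤ κ)
    {t x a b m : ℝ} (ha : 0 ≤ a) (hab : a ≤ b) (hb : b ≤ T) (hm : 0 ≤ m)
    (hla : l₁ ≤ x - q * (t - a)) (hbl : x - q * (t - b) ≤ l₂)
    (hmass : ∀ s ∈ Ioo a b, m ≤ ∫ y in Ioo l₁ l₂, J (x - q * (t - s) - y) * u s y) :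
    d * m * (b - a) ≤ Real.exp (κ * b) * u b (x - q * (t - b)) -
      Real.exp (κ * a) * u a (x - q * (t - a)) := by
  have hℓ : ∀ s ∈ Icc a b, (s, x - q * (t - s)) ∈ Icc 0 T ×ˢ Icc l₁ l₂ := fun s hs =>
    ⟨⟨ha.trans hs.1, hs.2.trans hb⟩, by nlinarith [hs.1], by nlinarith [hs.2]⟩
  have hℓ' : ∀ s ∈ Ioo a b, s ∈ Ioo 0 T ∧ x - q * (t - s) ∈ Ioo l₁ l₂ := fun s hs =>
    ⟨⟨ha.trans_lt hs.1, hs.2.trans_le hb⟩, by nlinarith [hs.1], by nlinarith [hs.2]⟩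
  have hcont : ContinuousOn (fun s => Real.exp (κ * s) * u s (x - q * (t - s))) (Icc a b) :=
    (Real.continuous_exp.comp (continuous_const.mul continuous_id)).continuousOn.mul
      (hu.contDiffOn.continuousOn.comp (f := fun s => (s, x - q * (t - s)))
        (Continuous.continuousOn (by fun_prop)) hℓ)
  have hderiv := fun s hs => hu.hasDerivAt_exp_mul_characteristic (κ := κ) (hℓ' s hs).1 (hℓ' s hs).2
  have hslope : ∀ s ∈ interior (Icc a b),
      d * m ≤ deriv (fun s => Real.exp (κ * s) * u s (x - q * (t - s))) s := by
    rw [interior_Icc]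
    intro s hs
    have hA := hu.sub_mul_le_fderivWithin hJ hnn hκW (hℓ' s hs).1 (hℓ' s hs).2
    have hexp : 1 ≤ Real.exp (κ * s) := Real.one_le_exp (mul_nonneg hκ (ha.trans hs.1.le))
    rw [(hderiv s hs).deriv]
    nlinarith [mul_le_mul_of_nonneg_left (hmass s hs) hd, mul_nonneg hd hm,
      mul_le_mul_of_nonneg_left hA (Real.exp_pos (κ * s)).le]
  exact (convex_Icc a b).mul_sub_le_image_sub_of_le_deriv hcont
    (fun s hs => (hderiv s (by rwa [interior_Icc] at hs)).differentiableAt.differentiableWithinAt)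
    hslope a (left_mem_Icc.2 hab) b (right_mem_Icc.2 hab) hab

theorem exists_forall_le_setIntegral (hu : IsNonlocalSupersolution l₁ l₂ d q T C J u)
    (hJ : IsDispersalKernel J) (hnn : ∀ t ∈ Icc 0 T, ∀ x ∈ Icc l₁ l₂, 0 ≤ u t x) {δ j : ℝ}
    (hj : 0 < j) (hJδ : ∀ z, |z| < δ → j ≤ J z) {τ y₀ ρ : ℝ} (hτ : τ ∈ Ico 0 T)
    (hy₀ : y₀ ∈ Ioc l₁ l₂) (hpos : 0 < u τ y₀) (hρ : 0 < ρ) :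
    ∃ r ∈ Ioo 0 ρ, ∃ μ > 0, ∀ s ∈ Icc τ (τ + r), ∀ z, |z - y₀| + r < δ →
      μ ≤ ∫ y in Ioo l₁ l₂, J (z - y) * u s y := by
  have hτK : (τ, y₀) ∈ Icc 0 T ×ˢ Icc l₁ l₂ := ⟨Ico_subset_Icc_self hτ, Ioc_subset_Icc_self hy₀⟩
  obtain ⟨r₀, hr₀, hball⟩ := Metric.mem_nhdsWithin_iff.1 <|
    hu.contDiffOn.continuousOn _ hτK |>.eventually (eventually_gt_nhds (half_lt_self hpos))
  obtain ⟨r, ⟨hrr₀, hrρ, hrT, hry⟩, hr⟩ : ∃ r, (r < r₀ ∧ r < ρ ∧ r < T - τ ∧ r < y₀ - l₁) ∧ 0 < r :=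
    ((((eventually_lt_nhds hr₀).and ((eventually_lt_nhds hρ).and
      ((eventually_lt_nhds (sub_pos.2 hτ.2)).and (eventually_lt_nhds (sub_pos.2 hy₀.1)))))
        |>.filter_mono nhdsWithin_le_nhds).and (self_mem_nhdsWithin (s := Ioi 0))).exists
  -- `u > u(τ, y₀) / 2` on `[τ, τ + r] × (y₀ - r, y₀)`
  refine ⟨r, ⟨hr, hrρ⟩, j * (u τ y₀ / 2) * r, by positivity, fun s hs z hz => ?_⟩
  have hsT : s ∈ Icc 0 T := ⟨hτ.1.trans hs.1, by linarith [hs.2]⟩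
  rw [show j * (u τ y₀ / 2) * r = j * (u τ y₀ / 2) * (y₀ - (y₀ - r)) by ring]
  refine mul_sub_le_setIntegral_Ioo (integrableOn_Ioo_comp_sub_mul hJ.continuous
    (hu.continuousOn_slice hsT) _) (fun y hy => mul_nonneg (hJ.nonneg _)
      (hnn s hsT y (Ioo_subset_Icc_self hy))) (by linarith : y₀ - r ≤ y₀)
    (Ioo_subset_Ioo (by linarith) hy₀.2) fun y hy => ?_
  have hJy : j ≤ J (z - y) := hJδ _ <| abs_lt.2
    ⟨by linarith [neg_abs_le (z - y₀), hy.2], by linarith [le_abs_self (z - y₀), hy.1]⟩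
  have hdist : dist (s, y) (τ, y₀) < r₀ := by
    rw [Prod.dist_eq, Real.dist_eq, Real.dist_eq]
    exact max_lt (by rw [abs_lt]; constructor <;> linarith [hs.1, hs.2])
      (by rw [abs_lt]; constructor <;> linarith [hy.1, hy.2])
  have huy : u τ y₀ / 2 < u s y :=
    hball ⟨hdist, hsT, by linarith [hy.1], by linarith [hy.2, hy₀.2]⟩
  exact mul_le_mul hJy huy.le (by linarith) (hJ.nonneg _)

theorem pos_of_pos_near_foot (hu : IsNonlocalSupersolution l₁ l₂ d q T C J u)
    (hJ : IsDispersalKernel J) (hq : 0 < q) (hd : 0 < d)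
    (hnn : ∀ t ∈ Icc 0 T, ∀ x ∈ Icc l₁ l₂, 0 ≤ u t x) {δ j : ℝ} (hj : 0 < j)
    (hJδ : ∀ z, |z| < δ → j ≤ J z) {τ t x y₀ : ℝ} (hτ : 0 ≤ τ) (hτt : τ < t) (ht : t ≤ T)
    (hx : x ≤ l₂) (hfoot : l₁ ≤ x - q * (t - τ)) (hy₀ : y₀ ∈ Ioc l₁ l₂)
    (hdist : |x - q * (t - τ) - y₀| < δ) (hpos : 0 < u τ y₀) : 0 < u t x := by
  obtain ⟨r, ⟨hr, hrρ⟩, μ, hμ, hmass⟩ := hu.exists_forall_le_setIntegral hJ hnn hj hJδ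
    ⟨hτ, hτt.trans_le ht⟩ hy₀ hpos (ρ := min (t - τ) ((δ - |x - q * (t - τ) - y₀|) / (1 + q)))
    (lt_min (sub_pos.2 hτt) (div_pos (sub_pos.2 hdist) (by linarith)))
  have hrt : r < t - τ := hrρ.trans_le (min_le_left _ _)
  have hrδ : (1 + q) * r < δ - |x - q * (t - τ) - y₀| := by
    have := hrρ.trans_le (min_le_right _ _)
    rwa [lt_div_iff₀ (by linarith), mul_comm] at this
  set κ := d * (∫ y, J y) + |C|
  have hκ : 0 ≤ κ := add_nonneg (mul_nonneg hd.le (integral_nonneg hJ.nonneg)) (abs_nonneg C)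
  have hκW : ∀ z, d * (∫ y in Ioo l₁ l₂, J (z - y)) + C ≤ κ := fun z =>
    add_le_add (mul_le_mul_of_nonneg_left
      (setIntegral_comp_sub_le_integral hJ.integrable hJ.nonneg _ z) hd.le) (le_abs_self C)
  have hbefore := hu.mul_sub_le_exp_mul_sub hJ hq hd.le hnn hκ hκW hτ (by linarith) (by linarith)
    hμ.le hfoot (by nlinarith) fun s hs => hmass s (Ioo_subset_Icc_self hs) _ <| by
      rw [show x - q * (t - s) - y₀ = x - q * (t - τ) - y₀ + q * (s - τ) by ring]
      nlinarith [abs_add_le (x - q * (t - τ) - y₀) (q * (s - τ)),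
        abs_of_pos (mul_pos hq (sub_pos.2 hs.1)), hs.2]
  have hafter := hu.mul_sub_le_exp_mul_sub hJ hq hd.le hnn hκ hκW (t := t) (x := x) (a := τ + r)
    (m := 0) (by linarith) (by linarith) ht le_rfl (by nlinarith) (by simpa using hx)
    fun s hs => setIntegral_nonneg measurableSet_Ioo fun y hy => mul_nonneg (hJ.nonneg _)
      (hnn s ⟨by linarith [hs.1], by linarith [hs.2]⟩ y (Ioo_subset_Icc_self hy))
  have hτpos : 0 ≤ Real.exp (κ * τ) * u τ (x - q * (t - τ)) :=
    mul_nonneg (Real.exp_pos _).le (hnn τ ⟨hτ, by linarith⟩ _ ⟨hfoot, by nlinarith⟩)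
  have hgain : 0 < d * μ * (τ + r - τ) := by
    have : 0 < τ + r - τ := by linarith
    positivity
  simp only [sub_self, mul_zero, sub_zero] at hafter
  exact pos_of_mul_pos_right (by linarith) (Real.exp_pos _).le

theorem pos_of_pos_initial (hu : IsNonlocalSupersolution l₁ l₂ d q T C J u)
    (hJ : IsDispersalKernel J) (hq : 0 < q) (hd : 0 < d)
    (hnn : ∀ t ∈ Icc 0 T, ∀ x ∈ Icc l₁ l₂, 0 ≤ u t x) {δ j : ℝ} (hδ : 0 < δ)
    (hj : 0 < j) (hJδ : ∀ z, |z| < δ → j ≤ J z) {x₀ : ℝ} (hx₀ : x₀ ∈ Ioc l₁ l₂)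
    (hpos : 0 < u 0 x₀) : ∀ t ∈ Icc 0 T, 0 < u t x₀ := by
  set σ := min δ (x₀ - l₁) / (2 * q)
  have hqσ : q * σ < min δ (x₀ - l₁) := by
    have := lt_min hδ (sub_pos.2 hx₀.1)
    simp only [σ]; field_simp; linarith
  have hσ : 0 < σ := by have := lt_min hδ (sub_pos.2 hx₀.1); positivity
  have hstep : ∀ t ∈ Icc 0 T, ∀ t' ∈ Icc 0 T, dist t t' < σ →
      (∀ τ ∈ Icc 0 t, 0 < u τ x₀) → ∀ τ ∈ Icc 0 t', 0 < u τ x₀ := by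
    intro t ht t' ht' htt' hpast τ hτ
    rcases le_or_gt τ t with hτt | hτt
    · exact hpast τ ⟨hτ.1, hτt⟩
    have hτσ : τ - t < σ := by rw [Real.dist_eq, abs_lt] at htt'; linarith [hτ.2]
    have hq' : q * (τ - t) < min δ (x₀ - l₁) :=
      (mul_lt_mul_of_pos_left hτσ hq).trans hqσ
    refine hu.pos_of_pos_near_foot hJ hq hd hnn hj hJδ ht.1 hτt (hτ.2.trans ht'.2) hx₀.2 ?_ hx₀ ?_
      (hpast t ⟨ht.1, le_rfl⟩)
    · linarith [min_le_right δ (x₀ - l₁)]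
    · rw [sub_sub_cancel_left, abs_neg, abs_of_pos (mul_pos hq (sub_pos.2 hτt))]
      exact hq'.trans_le (min_le_left _ _)
  intro t ht
  exact isPreconnected_Icc.forall_of_dist_lt_imp hσ hstep (left_mem_Icc.2 (ht.1.trans ht.2))
    (fun τ hτ => le_antisymm hτ.2 hτ.1 ▸ hpos) t ht t ⟨ht.1, le_rfl⟩

theorem pos_of_forall_pos (hu : IsNonlocalSupersolution l₁ l₂ d q T C J u)
    (hJ : IsDispersalKernel J) (hq : 0 < q) (hd : 0 < d)
    (hnn : ∀ t ∈ Icc 0 T, ∀ x ∈ Icc l₁ l₂, 0 ≤ u t x) {δ j : ℝ} (hδ : 0 < δ) (hj : 0 < j)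
    (hJδ : ∀ z, |z| < δ → j ≤ J z) {x₀ : ℝ} (hx₀ : x₀ ∈ Ioc l₁ l₂)
    (hpos : ∀ t ∈ Ioc 0 T, 0 < u t x₀) : ∀ x ∈ Ioc l₁ l₂, ∀ t ∈ Ioc 0 T, 0 < u t x := by
  refine isPreconnected_Ioc.forall_of_dist_lt_imp (half_pos hδ) ?_ hx₀ hpos
  intro y hy y' hy' hyy' hpast t ht
  have hη : 0 < min (δ / 2) (y' - l₁) := lt_min (half_pos hδ) (sub_pos.2 hy'.1)
  set σ := min (t / 2) (min (δ / 2) (y' - l₁) / (2 * q))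
  have hσ : 0 < σ := lt_min (half_pos ht.1) (by positivity)
  have hqσ : q * σ < min (δ / 2) (y' - l₁) := by
    have : σ ≤ min (δ / 2) (y' - l₁) / (2 * q) := min_le_right _ _
    rw [le_div_iff₀ (by positivity)] at this
    linarith
  have hσt : σ < t := (min_le_left _ _).trans_lt (half_lt_self ht.1)
  refine hu.pos_of_pos_near_foot hJ hq hd hnn hj hJδ (τ := t - σ) (by linarith) (by linarith)
    ht.2 hy'.2 ?_ hy ?_ (hpast (t - σ) ⟨by linarith, by linarith [ht.2]⟩)
  · rw [sub_sub_cancel]; linarith [min_le_right (δ / 2) (y' - l₁)]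
  · rw [sub_sub_cancel, Real.dist_eq] at *
    have := min_le_left (δ / 2) (y' - l₁)
    rw [abs_sub_comm] at hyy'
    calc |y' - q * σ - y| ≤ |y' - y| + |q * σ| := by
          rw [sub_right_comm]; exact abs_sub _ _
      _ < δ := by rw [abs_of_pos (mul_pos hq hσ)]; linarith

end IsNonlocalSupersolution

theorem neumann_maximum_principle_general
    (l₁ l₂ d q T : ℝ) (J : ℝ → ℝ) (c u : ℝ → ℝ → ℝ) (u₀ : ℝ → ℝ)
    (hl : l₁ < l₂) (hd : 0 < d) (hq : 0 < q) (hT : 0 < T)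
    -- condition (J)
    (hJc : Continuous J) (hJnn : ∀ x, 0 ≤ J x) (hJ0 : 0 < J 0)
    (hJint : MeasureTheory.Integrable J)
    -- c ∈ L∞((0,T)×Ω)
    (hc : ∃ C, ∀ t ∈ Set.Ioo 0 T, ∀ x ∈ Set.Ioo l₁ l₂, |c t x| ≤ C)
    -- u ∈ C¹([0,T]×[l₁,l₂])
    (hu : ContDiffOn ℝ 1 (fun p : ℝ × ℝ => u p.1 p.2) (Set.Icc 0 T ×ˢ Set.Icc l₁ l₂))
    -- differential inequality
    (hineq : ∀ t ∈ Set.Ioo 0 T, ∀ x ∈ Set.Ioo l₁ l₂,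
      deriv (fun s => u s x) t ≥
        d * (∫ y in Set.Ioo l₁ l₂, J (x - y) * (u t y - u t x))
          - q * deriv (fun y => u t y) x + c t x * u t x)
    -- boundary condition
    (hbd : ∀ t ∈ Set.Ioo 0 T, 0 ≤ u t l₁)
    -- initial condition
    (hinit : ∀ x ∈ Set.Icc l₁ l₂, u 0 x = u₀ x)
    (hu₀nn : ∀ x ∈ Set.Icc l₁ l₂, 0 ≤ u₀ x) :
    (∀ t ∈ Set.Icc 0 T, ∀ x ∈ Set.Icc l₁ l₂, 0 ≤ u t x) ∧
      ((∃ x ∈ Set.Icc l₁ l₂, u₀ x ≠ 0) →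
        ∀ t ∈ Set.Ioc 0 T, ∀ x ∈ Set.Ioc l₁ l₂, 0 < u t x) := by
  obtain ⟨C, hC⟩ := hc
  have hJ : IsDispersalKernel J := ⟨hJc, hJnn, hJint⟩
  have hsuper : IsNonlocalSupersolution l₁ l₂ d q T C J u := .of_le_deriv hu hC hineq
  have hnn := hsuper.nonneg hJ hl hT hd.le hq.le hbd fun x hx => hinit x hx ▸ hu₀nn x hx
  refine ⟨hnn, ?_⟩
  rintro ⟨x₁, hx₁, hne⟩
  obtain ⟨x₀, hx₀, hpos⟩ := (hsuper.continuousOn_slice (left_mem_Icc.2 hT.le)).exists_mem_Ioc_pos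
    hl hx₁ (hinit x₁ hx₁ ▸ (hu₀nn x₁ hx₁).lt_of_ne' hne)
  obtain ⟨δ, hδ, hJδ⟩ := Metric.eventually_nhds_iff.1
    ((hJc.tendsto 0).eventually (eventually_gt_nhds (half_lt_self hJ0)))
  have hJδ' : ∀ z, |z| < δ → J 0 / 2 ≤ J z := fun z hz =>
    (hJδ (by rwa [Real.dist_eq, sub_zero])).le
  have hcolumn := hsuper.pos_of_pos_initial hJ hq hd hnn hδ (half_pos hJ0) hJδ' hx₀ hpos
  have hspread := hsuper.pos_of_forall_pos hJ hq hd hnn hδ (half_pos hJ0) hJδ' hx₀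
    fun t ht => hcolumn t (Ioc_subset_Icc_self ht)
  exact fun t ht x hx => hspread x hx t ht

/-- **Maximum principle for the nonlocal Neumann advection problem.**
If `u ∈ C¹([0,T]×[l₁,l₂])` satisfies
`u_t ≥ d∫_Ω J(x−y)(u(t,y) − u(t,x))dy − q u_x + c(t,x)u` on `(0,T)×Ω`,
`u(t,l₁) ≥ 0` and `u(0,·) = u₀ ≥ 0`, then `u ≥ 0` on `[0,T]×[l₁,l₂]`;
moreover `u > 0` on `(0,T]×(l₁,l₂]` if `u₀ ≢ 0`. -/
theorem neumann_maximum_principle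
    (l₁ l₂ d q T : ℝ) (J : ℝ → ℝ) (c u : ℝ → ℝ → ℝ) (u₀ : ℝ → ℝ)
    (hl : l₁ < l₂) (hd : 0 < d) (hq : 0 < q) (hT : 0 < T)
    -- condition (J)
    (hJc : Continuous J) (hJnn : ∀ x, 0 ≤ J x) (hJ0 : 0 < J 0)
    (hJint : MeasureTheory.Integrable J) (hJ1 : (∫ x, J x) = 1)
    -- condition (J1)
    (hJsymm : ∀ x, J (-x) = J x) (hJbdd : ∃ C, ∀ x, J x ≤ C)
    -- c ∈ L∞((0,T)×Ω)
    (hc : ∃ C, ∀ t ∈ Set.Ioo 0 T, ∀ x ∈ Set.Ioo l₁ l₂, |c t x| ≤ C)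
    -- u ∈ C¹([0,T]×[l₁,l₂])
    (hu : ContDiffOn ℝ 1 (fun p : ℝ × ℝ => u p.1 p.2) (Set.Icc 0 T ×ˢ Set.Icc l₁ l₂))
    -- differential inequality
    (hineq : ∀ t ∈ Set.Ioo 0 T, ∀ x ∈ Set.Ioo l₁ l₂,
      deriv (fun s => u s x) t ≥
        d * (∫ y in Set.Ioo l₁ l₂, J (x - y) * (u t y - u t x))
          - q * deriv (fun y => u t y) x + c t x * u t x)
    -- boundary condition
    (hbd : ∀ t ∈ Set.Ioo 0 T, 0 ≤ u t l₁)
    -- initial condition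
    (hinit : ∀ x ∈ Set.Icc l₁ l₂, u 0 x = u₀ x)
    (hu₀nn : ∀ x ∈ Set.Icc l₁ l₂, 0 ≤ u₀ x) :
    (∀ t ∈ Set.Icc 0 T, ∀ x ∈ Set.Icc l₁ l₂, 0 ≤ u t x) ∧
      ((∃ x ∈ Set.Icc l₁ l₂, u₀ x ≠ 0) →
        ∀ t ∈ Set.Ioc 0 T, ∀ x ∈ Set.Ioc l₁ l₂, 0 < u t x) :=
  neumann_maximum_principle_general l₁ l₂ d q T J c u u₀ hl hd hq hT hJc hJnn hJ0 hJint hc hu hineq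
    hbd hinit hu₀nn
end

section
/- Assume conditions (J), (J1) and let f satisfy (F1) and (F2) on the interval of values [min over [0,T]×[l₁,l₂] of min{ū,u̲}, max over [0,T]×[l₁,l₂] of max{ū,u̲}]. Let T > 0 and let ū, u̲ ∈ C¹([0,T]×[l₁,l₂]) satisfy: ū_t ≥ d∫_Ω J(x−y)(ū(t,y) − ū(t,x))dy − q ū_x + f(t,x,ū) and u̲_t ≤ d∫_Ω J(x−y)(u̲(t,y) − u̲(t,x))dy − q u̲_x + f(t,x,u̲) on (0,T)×Ω; ū(t,l₁) ≥ 0 ≥ u̲(t,l₁) for t ∈ (0,T); and ū(0,x) ≥ u₀(x) ≥ u̲(0,x) on [l₁,l₂] for some admissible initial datum u₀. Then ū(t,x) ≥ u̲(t,x) for all (t,x) ∈ (0,T)×Ω. -/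
/-!
Suppose `ū < u̲` somewhere in `(0,T) × Ω`, say at time `t₁`, and let `K` be a Lipschitz constant
of `f` in `u` on the range of `ū, u̲`. Minimise `e^{-(K+1)t} (ū - u̲)` over `[0,t₁] × [l₁,l₂]`:
the minimum is negative, so by the initial and boundary ordering it is attained at some `t > 0`
and `x ∈ (l₁,l₂]`. There the time derivative of `ū - u̲` is at most `(K+1)M`, `M < 0` being its
value, its one-sided `x`-derivative is `≤ 0` (so `-q ∂ₓ` has a good sign), and the nonlocal term
of `ū - u̲` is `≥ 0`. The two differential inequalities, extended to `x = l₂` by continuity,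
then force `0 ≤ (K+1)M - KM = M`, a contradiction.
-/

open MeasureTheory Set Function

lemma HasDerivWithinAt.nonpos_of_isMinOn_Icc_right {g : ℝ → ℝ} {g' c a : ℝ} (hca : c < a)
    (hg : HasDerivWithinAt g g' (Icc c a) a) (hmin : IsMinOn g (Icc c a) a) : g' ≤ 0 := by
  have hdir : c - a ∈ posTangentConeAt (Icc c a) a :=
    sub_mem_posTangentConeAt_of_segment_subset (by rw [segment_symm, segment_eq_Icc hca.le])
  have := hmin.localize.hasFDerivWithinAt_nonneg hg hdir
  simp only [ContinuousLinearMap.toSpanSingleton_apply, smul_eq_mul] at this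
  exact nonpos_of_mul_nonneg_right this (sub_neg.2 hca)

lemma le_on_Icc_of_le_on_Ioo {a b : ℝ} {φ ψ : ℝ → ℝ} (hab : a < b)
    (hφ : ContinuousOn φ (Icc a b)) (hψ : ContinuousOn ψ (Icc a b))
    (h : ∀ x ∈ Ioo a b, φ x ≤ ψ x) : ∀ x ∈ Icc a b, φ x ≤ ψ x := by
  rw [← closure_Ioo hab.ne] at hφ hψ ⊢
  exact le_on_closure h hφ hψ

section Rectangle

variable {a b c e t x : ℝ} {u : ℝ → ℝ → ℝ}

lemma hasDerivWithinAt_fst_of_differentiableOn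
    (hu : DifferentiableOn ℝ (uncurry u) (Icc a b ×ˢ Icc c e)) (ht : t ∈ Icc a b)
    (hx : x ∈ Icc c e) :
    HasDerivWithinAt (fun s => u s x)
      (fderivWithin ℝ (uncurry u) (Icc a b ×ˢ Icc c e) (t, x) (1, 0)) (Icc a b) t :=
  (hu (t, x) ⟨ht, hx⟩).hasFDerivWithinAt.comp_hasDerivWithinAt (x := t) (f := fun s => (s, x))
    ((hasDerivAt_id t).prodMk (hasDerivAt_const t x)).hasDerivWithinAt
    fun _ hs => mk_mem_prod hs hx

lemma hasDerivWithinAt_snd_of_differentiableOn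
    (hu : DifferentiableOn ℝ (uncurry u) (Icc a b ×ˢ Icc c e)) (ht : t ∈ Icc a b)
    (hx : x ∈ Icc c e) :
    HasDerivWithinAt (fun y => u t y)
      (fderivWithin ℝ (uncurry u) (Icc a b ×ˢ Icc c e) (t, x) (0, 1)) (Icc c e) x :=
  (hu (t, x) ⟨ht, hx⟩).hasFDerivWithinAt.comp_hasDerivWithinAt (x := x) (f := fun y => (t, y))
    ((hasDerivAt_const x t).prodMk (hasDerivAt_id x)).hasDerivWithinAt
    fun _ hy => mk_mem_prod ht hy

lemma continuousOn_slice_of_continuousOn {E : Type*} [TopologicalSpace E] {g : ℝ → ℝ → E}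
    (hg : ContinuousOn (uncurry g) (Icc a b ×ˢ Icc c e)) (ht : t ∈ Icc a b) :
    ContinuousOn (g t) (Icc c e) :=
  hg.comp (Continuous.prodMk_right t).continuousOn fun _ hy => mk_mem_prod ht hy

lemma continuousOn_fderivWithin_apply_of_contDiffOn (hab : a < b) (hce : c < e)
    (hu : ContDiffOn ℝ 1 (uncurry u) (Icc a b ×ˢ Icc c e)) (ht : t ∈ Icc a b) (v : ℝ × ℝ) :
    ContinuousOn (fun y => fderivWithin ℝ (uncurry u) (Icc a b ×ˢ Icc c e) (t, y) v)
      (Icc c e) :=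
  have hd := hu.continuousOn_fderivWithin ((uniqueDiffOn_Icc hab).prod (uniqueDiffOn_Icc hce))
    le_rfl
  (continuousOn_slice_of_continuousOn (g := fun t y => fderivWithin ℝ (uncurry u)
    (Icc a b ×ˢ Icc c e) (t, y)) hd ht).clm_apply continuousOn_const

end Rectangle

section Nonlocal

variable {J g : ℝ → ℝ} {l₁ l₂ : ℝ}

noncomputable def nonlocalDispersal (J : ℝ → ℝ) (l₁ l₂ : ℝ) (g : ℝ → ℝ) (x : ℝ) : ℝ :=
  ∫ y in Ioo l₁ l₂, J (x - y) * (g y - g x)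

lemma integrableOn_kernel_mul (hJ : Continuous J) (hg : ContinuousOn g (Icc l₁ l₂)) (x : ℝ) :
    IntegrableOn (fun y => J (x - y) * g y) (Ioo l₁ l₂) :=
  (((hJ.comp (continuous_sub_left x)).continuousOn.mul hg).integrableOn_Icc).mono_set
    Ioo_subset_Icc_self

lemma continuous_setIntegral_kernel_mul {C : ℝ} (hJ : Continuous J) (hC : ∀ z, |J z| ≤ C)
    (hg : ContinuousOn g (Icc l₁ l₂)) :
    Continuous fun x => ∫ y in Ioo l₁ l₂, J (x - y) * g y := by
  refine continuous_of_dominated (bound := fun y => C * |g y|)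
    (fun x => (integrableOn_kernel_mul hJ hg x).aestronglyMeasurable) (fun x => ?_)
    ((((hg.abs).integrableOn_Icc).mono_set Ioo_subset_Icc_self).const_mul C)
    (ae_of_all _ fun y => (hJ.comp (continuous_sub_right y)).mul continuous_const)
  refine ae_of_all _ fun y => ?_
  rw [Real.norm_eq_abs, abs_mul]
  exact mul_le_mul_of_nonneg_right (hC _) (abs_nonneg _)

lemma nonlocalDispersal_eq (hJ : Continuous J) (hg : ContinuousOn g (Icc l₁ l₂)) (x : ℝ) :
    nonlocalDispersal J l₁ l₂ g x =
      (∫ y in Ioo l₁ l₂, J (x - y) * g y) - (∫ y in Ioo l₁ l₂, J (x - y) * 1) * g x := by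
  rw [← integral_mul_const, ← integral_sub (integrableOn_kernel_mul hJ hg x)
    ((integrableOn_kernel_mul hJ continuousOn_const x).mul_const _)]
  simp only [nonlocalDispersal, mul_sub, mul_one]

lemma continuousOn_nonlocalDispersal {C : ℝ} (hJ : Continuous J) (hC : ∀ z, |J z| ≤ C)
    (hg : ContinuousOn g (Icc l₁ l₂)) :
    ContinuousOn (nonlocalDispersal J l₁ l₂ g) (Icc l₁ l₂) := by
  refine ContinuousOn.congr ?_ fun x _ => nonlocalDispersal_eq hJ hg x
  exact (continuous_setIntegral_kernel_mul hJ hC hg).continuousOn.sub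
    ((continuous_setIntegral_kernel_mul hJ hC continuousOn_const).continuousOn.mul hg)

lemma nonlocalDispersal_le_of_isMinOn_sub {g₁ g₂ : ℝ → ℝ} {x : ℝ} (hJ : Continuous J)
    (hJnn : ∀ z, 0 ≤ J z) (hg₁ : ContinuousOn g₁ (Icc l₁ l₂)) (hg₂ : ContinuousOn g₂ (Icc l₁ l₂))
    (hmin : IsMinOn (g₁ - g₂) (Icc l₁ l₂) x) :
    nonlocalDispersal J l₁ l₂ g₂ x ≤ nonlocalDispersal J l₁ l₂ g₁ x := by
  refine setIntegral_mono_on (integrableOn_kernel_mul hJ (hg₂.sub continuousOn_const) x)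
    (integrableOn_kernel_mul hJ (hg₁.sub continuousOn_const) x) measurableSet_Ioo
    fun y hy => mul_le_mul_of_nonneg_left ?_ (hJnn _)
  have : g₁ x - g₂ x ≤ g₁ y - g₂ y := hmin (Ioo_subset_Icc_self hy)
  linarith

end Nonlocal

section Residual

variable {d q T l₁ l₂ t x : ℝ} {J : ℝ → ℝ} {f : ℝ → ℝ → ℝ → ℝ} {u v : ℝ → ℝ → ℝ}

/-- The partial derivatives are taken within the closed rectangle, so that the residual is
continuous up to `x = l₂`, where the differential inequalities are not assumed. -/
noncomputable def nonlocalResidual (d q T l₁ l₂ : ℝ) (J : ℝ → ℝ) (f : ℝ → ℝ → ℝ → ℝ)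
    (u : ℝ → ℝ → ℝ) (t x : ℝ) : ℝ :=
  fderivWithin ℝ (uncurry u) (Icc 0 T ×ˢ Icc l₁ l₂) (t, x) (1, 0) -
    (d * nonlocalDispersal J l₁ l₂ (u t) x
      - q * fderivWithin ℝ (uncurry u) (Icc 0 T ×ˢ Icc l₁ l₂) (t, x) (0, 1) + f t x (u t x))

lemma nonlocalResidual_eq_of_mem_Ioo (hu : DifferentiableOn ℝ (uncurry u) (Icc 0 T ×ˢ Icc l₁ l₂))
    (ht : t ∈ Ioo 0 T) (hx : x ∈ Ioo l₁ l₂) :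
    nonlocalResidual d q T l₁ l₂ J f u t x = deriv (fun s => u s x) t -
      (d * (∫ y in Ioo l₁ l₂, J (x - y) * (u t y - u t x))
        - q * deriv (fun y => u t y) x + f t x (u t x)) := by
  have ht' := Ioo_subset_Icc_self ht
  have hx' := Ioo_subset_Icc_self hx
  rw [nonlocalResidual, nonlocalDispersal,
    ((hasDerivWithinAt_fst_of_differentiableOn hu ht' hx').hasDerivAt
      (Icc_mem_nhds ht.1 ht.2)).deriv,
    ((hasDerivWithinAt_snd_of_differentiableOn hu ht' hx').hasDerivAt
      (Icc_mem_nhds hx.1 hx.2)).deriv]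

lemma continuousOn_nonlocalResidual {C : ℝ} (hT : 0 < T) (hl : l₁ < l₂) (hJ : Continuous J)
    (hC : ∀ z, |J z| ≤ C) (hf : Continuous fun p : ℝ × ℝ × ℝ => f p.1 p.2.1 p.2.2)
    (hu : ContDiffOn ℝ 1 (uncurry u) (Icc 0 T ×ˢ Icc l₁ l₂)) (ht : t ∈ Icc 0 T) :
    ContinuousOn (nonlocalResidual d q T l₁ l₂ J f u t) (Icc l₁ l₂) := by
  have hut := continuousOn_slice_of_continuousOn hu.continuousOn ht
  have hfu : ContinuousOn (fun x => f t x (u t x)) (Icc l₁ l₂) :=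
    hf.comp_continuousOn (continuousOn_const.prodMk (continuousOn_id.prodMk hut))
  exact (continuousOn_fderivWithin_apply_of_contDiffOn hT hl hu ht _).sub
    (((continuousOn_const.mul (continuousOn_nonlocalDispersal hJ hC hut)).sub
      (continuousOn_const.mul (continuousOn_fderivWithin_apply_of_contDiffOn hT hl hu ht _))).add
      hfu)

lemma nonlocalResidual_le_of_le_on_Ioo {C : ℝ} (hT : 0 < T) (hl : l₁ < l₂)
    (hJ : Continuous J) (hC : ∀ z, |J z| ≤ C)
    (hf : Continuous fun p : ℝ × ℝ × ℝ => f p.1 p.2.1 p.2.2)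
    (hu : ContDiffOn ℝ 1 (uncurry u) (Icc 0 T ×ˢ Icc l₁ l₂))
    (hv : ContDiffOn ℝ 1 (uncurry v) (Icc 0 T ×ˢ Icc l₁ l₂)) (ht : t ∈ Icc 0 T)
    (h : ∀ x ∈ Ioo l₁ l₂, nonlocalResidual d q T l₁ l₂ J f u t x ≤
      nonlocalResidual d q T l₁ l₂ J f v t x) :
    ∀ x ∈ Icc l₁ l₂, nonlocalResidual d q T l₁ l₂ J f u t x ≤
      nonlocalResidual d q T l₁ l₂ J f v t x :=
  le_on_Icc_of_le_on_Ioo hl (continuousOn_nonlocalResidual hT hl hJ hC hf hu ht)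
    (continuousOn_nonlocalResidual hT hl hJ hC hf hv ht) h

lemma fderivWithin_fst_sub_le_of_isMinOn {r : ℝ}
    (hu : DifferentiableOn ℝ (uncurry u) (Icc 0 T ×ˢ Icc l₁ l₂))
    (hv : DifferentiableOn ℝ (uncurry v) (Icc 0 T ×ˢ Icc l₁ l₂))
    (ht : t ∈ Ioc 0 T) (hx : x ∈ Icc l₁ l₂)
    (hmin : IsMinOn (fun s => Real.exp (-r * s) * (u s x - v s x)) (Icc 0 t) t) :
    fderivWithin ℝ (uncurry u) (Icc 0 T ×ˢ Icc l₁ l₂) (t, x) (1, 0)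
      - fderivWithin ℝ (uncurry v) (Icc 0 T ×ˢ Icc l₁ l₂) (t, x) (1, 0)
      ≤ r * (u t x - v t x) := by
  have hW := ((hasDerivWithinAt_fst_of_differentiableOn hu (Ioc_subset_Icc_self ht) hx).sub
    (hasDerivWithinAt_fst_of_differentiableOn hv (Ioc_subset_Icc_self ht) hx)).mono
    (Icc_subset_Icc_right ht.2)
  have hE : HasDerivAt (fun s => Real.exp (-r * s)) (Real.exp (-r * t) * -r) t := by
    simpa using ((hasDerivAt_id t).const_mul (-r)).exp
  have h := (hE.hasDerivWithinAt.mul hW).nonpos_of_isMinOn_Icc_right ht.1 hmin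
  simp only [Pi.sub_apply] at h
  refine le_of_mul_le_mul_left (a := Real.exp (-r * t)) ?_ (Real.exp_pos _)
  linarith

lemma fderivWithin_snd_sub_nonpos_of_isMinOn
    (hu : DifferentiableOn ℝ (uncurry u) (Icc 0 T ×ˢ Icc l₁ l₂))
    (hv : DifferentiableOn ℝ (uncurry v) (Icc 0 T ×ˢ Icc l₁ l₂))
    (ht : t ∈ Icc 0 T) (hx : x ∈ Ioc l₁ l₂) (hmin : IsMinOn (u t - v t) (Icc l₁ l₂) x) :
    fderivWithin ℝ (uncurry u) (Icc 0 T ×ˢ Icc l₁ l₂) (t, x) (0, 1)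
      - fderivWithin ℝ (uncurry v) (Icc 0 T ×ˢ Icc l₁ l₂) (t, x) (0, 1) ≤ 0 :=
  (((hasDerivWithinAt_snd_of_differentiableOn hu ht (Ioc_subset_Icc_self hx)).sub
    (hasDerivWithinAt_snd_of_differentiableOn hv ht (Ioc_subset_Icc_self hx))).mono
    (Icc_subset_Icc_right hx.2)).nonpos_of_isMinOn_Icc_right hx.1
    (hmin.on_subset (Icc_subset_Icc_right hx.2))

lemma nonlocalResidual_sub_le_of_isMinOn {r : ℝ} (hd : 0 ≤ d) (hq : 0 ≤ q) (hJ : Continuous J)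
    (hJnn : ∀ z, 0 ≤ J z) (hu : DifferentiableOn ℝ (uncurry u) (Icc 0 T ×ˢ Icc l₁ l₂))
    (hv : DifferentiableOn ℝ (uncurry v) (Icc 0 T ×ˢ Icc l₁ l₂))
    (ht : t ∈ Ioc 0 T) (hx : x ∈ Ioc l₁ l₂)
    (hmin_t : IsMinOn (fun s => Real.exp (-r * s) * (u s x - v s x)) (Icc 0 t) t)
    (hmin_x : IsMinOn (u t - v t) (Icc l₁ l₂) x) :
    nonlocalResidual d q T l₁ l₂ J f u t x - nonlocalResidual d q T l₁ l₂ J f v t x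
      ≤ r * (u t x - v t x) - (f t x (u t x) - f t x (v t x)) := by
  have ht' := Ioc_subset_Icc_self ht
  have hdt := fderivWithin_fst_sub_le_of_isMinOn hu hv ht (Ioc_subset_Icc_self hx) hmin_t
  have hdx := fderivWithin_snd_sub_nonpos_of_isMinOn hu hv ht' hx hmin_x
  have hN := nonlocalDispersal_le_of_isMinOn_sub hJ hJnn
    (continuousOn_slice_of_continuousOn hu.continuousOn ht')
    (continuousOn_slice_of_continuousOn hv.continuousOn ht') hmin_x
  rw [nonlocalResidual, nonlocalResidual]
  linarith [mul_le_mul_of_nonneg_left hN hd, mul_nonpos_of_nonneg_of_nonpos hq hdx]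

end Residual

lemma exists_neg_isMinOn_of_neg {W : ℝ → ℝ → ℝ} {T l₁ l₂ r t₁ x₁ : ℝ}
    (hW : ContinuousOn (uncurry W) (Icc 0 T ×ˢ Icc l₁ l₂))
    (h0 : ∀ x ∈ Icc l₁ l₂, 0 ≤ W 0 x) (hbd : ∀ t ∈ Ioo 0 T, 0 ≤ W t l₁)
    (ht₁ : t₁ ∈ Ioo 0 T) (hx₁ : x₁ ∈ Icc l₁ l₂) (hneg : W t₁ x₁ < 0) :
    ∃ t ∈ Ioo 0 T, ∃ x ∈ Ioc l₁ l₂, W t x < 0 ∧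
      IsMinOn (fun s => Real.exp (-r * s) * W s x) (Icc 0 t) t ∧
      IsMinOn (W t) (Icc l₁ l₂) x := by
  have hsub : Icc 0 t₁ ×ˢ Icc l₁ l₂ ⊆ Icc 0 T ×ˢ Icc l₁ l₂ :=
    prod_mono (Icc_subset_Icc_right ht₁.2.le) subset_rfl
  have hcont : ContinuousOn (fun p : ℝ × ℝ => Real.exp (-r * p.1) * W p.1 p.2)
      (Icc 0 t₁ ×ˢ Icc l₁ l₂) :=
    (Real.continuous_exp.comp (continuous_const.mul continuous_fst)).continuousOn.mul
      (hW.mono hsub)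
  obtain ⟨⟨t, x⟩, ⟨ht, hx⟩, hmin⟩ := (isCompact_Icc.prod isCompact_Icc).exists_isMinOn
    ⟨(t₁, x₁), ⟨ht₁.1.le, le_rfl⟩, hx₁⟩ hcont
  have hWneg : W t x < 0 := neg_of_mul_neg_right
    ((hmin ⟨⟨ht₁.1.le, le_rfl⟩, hx₁⟩).trans_lt (mul_neg_of_pos_of_neg (Real.exp_pos _) hneg))
    (Real.exp_pos _).le
  have ht0 : 0 < t := lt_of_le_of_ne ht.1 (by rintro rfl; linarith [h0 x hx])
  have htT : t ∈ Ioo 0 T := ⟨ht0, ht.2.trans_lt ht₁.2⟩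
  have hxl : l₁ < x := lt_of_le_of_ne hx.1 (by rintro rfl; linarith [hbd t htT])
  refine ⟨t, htT, x, ⟨hxl, hx.2⟩, hWneg,
    fun s hs => isMinOn_iff.1 hmin (s, x) ⟨⟨hs.1, hs.2.trans ht.2⟩, hx⟩,
    fun y hy => le_of_mul_le_mul_left (isMinOn_iff.1 hmin (t, y) ⟨ht, hy⟩) (Real.exp_pos _)⟩

theorem neumann_comparison_principle_general
    (l₁ l₂ d q T : ℝ) (J : ℝ → ℝ) (f : ℝ → ℝ → ℝ → ℝ)
    (ubar ulow : ℝ → ℝ → ℝ) (u₀ : ℝ → ℝ)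
    (hl : l₁ < l₂) (hd : 0 < d) (hq : 0 < q) (hT : 0 < T)
    -- condition (J)
    (hJc : Continuous J) (hJnn : ∀ x, 0 ≤ J x)
    -- condition (J1)
    (hJbdd : ∃ C, ∀ x, J x ≤ C)
    -- condition (F1): continuity of f, f_t, f_x, f_u
    (hfc : Continuous fun p : ℝ × ℝ × ℝ => f p.1 p.2.1 p.2.2)
    -- condition (F1): Lipschitz continuity of f and f_u in u on bounded intervals
    (hflip : ∀ b B : ℝ, ∃ K, ∀ t ∈ Set.Ici (0:ℝ), ∀ x ∈ Set.Icc l₁ l₂,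
      ∀ u₁ ∈ Set.Icc b B, ∀ u₂ ∈ Set.Icc b B,
        |f t x u₁ - f t x u₂| ≤ K * |u₁ - u₂| ∧
        |deriv (fun v => f t x v) u₁ - deriv (fun v => f t x v) u₂| ≤ K * |u₁ - u₂|)
    -- ū, u̲ ∈ C¹([0,T]×[l₁,l₂])
    (hubar : ContDiffOn ℝ 1 (fun p : ℝ × ℝ => ubar p.1 p.2) (Set.Icc 0 T ×ˢ Set.Icc l₁ l₂))
    (hulow : ContDiffOn ℝ 1 (fun p : ℝ × ℝ => ulow p.1 p.2) (Set.Icc 0 T ×ˢ Set.Icc l₁ l₂))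
    -- upper solution inequality
    (hup : ∀ t ∈ Set.Ioo 0 T, ∀ x ∈ Set.Ioo l₁ l₂,
      deriv (fun s => ubar s x) t ≥
        d * (∫ y in Set.Ioo l₁ l₂, J (x - y) * (ubar t y - ubar t x))
          - q * deriv (fun y => ubar t y) x + f t x (ubar t x))
    -- lower solution inequality
    (hlow : ∀ t ∈ Set.Ioo 0 T, ∀ x ∈ Set.Ioo l₁ l₂,
      deriv (fun s => ulow s x) t ≤
        d * (∫ y in Set.Ioo l₁ l₂, J (x - y) * (ulow t y - ulow t x))
          - q * deriv (fun y => ulow t y) x + f t x (ulow t x))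
    -- boundary conditions
    (hbd : ∀ t ∈ Set.Ioo 0 T, ulow t l₁ ≤ 0 ∧ 0 ≤ ubar t l₁)
    -- initial ordering
    (hinit : ∀ x ∈ Set.Icc l₁ l₂, ulow 0 x ≤ u₀ x ∧ u₀ x ≤ ubar 0 x) :
    ∀ t ∈ Set.Ioo 0 T, ∀ x ∈ Set.Ioo l₁ l₂, ulow t x ≤ ubar t x := by
  obtain ⟨C, hC⟩ := hJbdd
  have hJabs : ∀ z, |J z| ≤ C := fun z => (abs_of_nonneg (hJnn z)).trans_le (hC z)
  obtain ⟨B, hB⟩ := (isCompact_Icc.prod isCompact_Icc).exists_bound_of_continuousOn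
    (hubar.continuousOn.prodMk hulow.continuousOn)
  obtain ⟨K, hK⟩ := hflip (-B) B
  intro t₁ ht₁ x₁ hx₁
  by_contra! hlt
  -- the weight `e^{-(K+1)t}` makes the time derivative beat the Lipschitz bound on `f`
  obtain ⟨t, ht, x, hx, hneg, hmin_t, hmin_x⟩ :=
    exists_neg_isMinOn_of_neg (W := fun t x => ubar t x - ulow t x) (r := K + 1)
      (hubar.continuousOn.sub hulow.continuousOn) (fun x hx => by linarith [hinit x hx])
      (fun t ht => by linarith [hbd t ht]) ht₁ (Ioo_subset_Icc_self hx₁) (by linarith)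
  have hcomp := nonlocalResidual_le_of_le_on_Ioo (d := d) (q := q) (f := f) hT hl hJc hJabs hfc
    hulow hubar (Ioo_subset_Icc_self ht) (fun y hy => by
      rw [nonlocalResidual_eq_of_mem_Ioo (hulow.differentiableOn one_ne_zero) ht hy,
        nonlocalResidual_eq_of_mem_Ioo (hubar.differentiableOn one_ne_zero) ht hy]
      linarith [hup t ht y hy, hlow t ht y hy]) x (Ioc_subset_Icc_self hx)
  have hres := nonlocalResidual_sub_le_of_isMinOn (f := f) hd.le hq.le hJc hJnn
    (hubar.differentiableOn one_ne_zero) (hulow.differentiableOn one_ne_zero)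
    (Ioo_subset_Ioc_self ht) hx hmin_t hmin_x
  have hbound := hB (t, x) ⟨Ioo_subset_Icc_self ht, Ioc_subset_Icc_self hx⟩
  have hlip := (hK t ht.1.le x (Ioc_subset_Icc_self hx) (ubar t x)
    (abs_le.1 ((norm_fst_le _).trans hbound)) (ulow t x)
    (abs_le.1 ((norm_snd_le _).trans hbound))).1
  rw [abs_of_neg hneg] at hlip
  linarith [neg_abs_le (f t x (ubar t x) - f t x (ulow t x))]

/-- **Comparison principle for the nonlocal Neumann advection problem.**
If `ū` is an upper solution and `u̲` a lower solution of
`u_t = d∫_Ω J(x−y)(u(t,y) − u(t,x))dy − q u_x + f(t,x,u)` with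
`ū(t,l₁) ≥ 0 ≥ u̲(t,l₁)` and `ū(0,·) ≥ u₀ ≥ u̲(0,·)` for an admissible
initial datum `u₀`, then `ū ≥ u̲` on `(0,T)×Ω`. -/
theorem neumann_comparison_principle
    (l₁ l₂ d q T : ℝ) (J : ℝ → ℝ) (f : ℝ → ℝ → ℝ → ℝ)
    (ubar ulow : ℝ → ℝ → ℝ) (u₀ : ℝ → ℝ)
    (hl : l₁ < l₂) (hd : 0 < d) (hq : 0 < q) (hT : 0 < T)
    -- condition (J)
    (hJc : Continuous J) (hJnn : ∀ x, 0 ≤ J x) (hJ0 : 0 < J 0)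
    (hJint : MeasureTheory.Integrable J) (hJ1 : (∫ x, J x) = 1)
    -- condition (J1)
    (hJsymm : ∀ x, J (-x) = J x) (hJbdd : ∃ C, ∀ x, J x ≤ C)
    -- condition (F1): continuity of f, f_t, f_x, f_u
    (hfc : Continuous fun p : ℝ × ℝ × ℝ => f p.1 p.2.1 p.2.2)
    (hftc : Continuous fun p : ℝ × ℝ × ℝ => deriv (fun s => f s p.2.1 p.2.2) p.1)
    (hfxc : Continuous fun p : ℝ × ℝ × ℝ => deriv (fun y => f p.1 y p.2.2) p.2.1)
    (hfuc : Continuous fun p : ℝ × ℝ × ℝ => deriv (fun v => f p.1 p.2.1 v) p.2.2)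
    -- condition (F1): Lipschitz continuity of f and f_u in u on bounded intervals
    (hflip : ∀ b B : ℝ, ∃ K, ∀ t ∈ Set.Ici (0:ℝ), ∀ x ∈ Set.Icc l₁ l₂,
      ∀ u₁ ∈ Set.Icc b B, ∀ u₂ ∈ Set.Icc b B,
        |f t x u₁ - f t x u₂| ≤ K * |u₁ - u₂| ∧
        |deriv (fun v => f t x v) u₁ - deriv (fun v => f t x v) u₂| ≤ K * |u₁ - u₂|)
    -- condition (F2)
    (hf0 : ∀ t ∈ Set.Ici (0:ℝ), ∀ x ∈ Set.Icc l₁ l₂, f t x 0 = 0)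
    (hfN : ∃ N > 0, ∀ t ∈ Set.Ici (0:ℝ), ∀ x ∈ Set.Icc l₁ l₂, ∀ v > N, f t x v < 0)
    -- admissible initial datum
    (hu₀C1 : ContDiffOn ℝ 1 u₀ (Set.Icc l₁ l₂)) (hu₀l : u₀ l₁ = 0)
    (hu₀nn : ∀ x ∈ Set.Icc l₁ l₂, 0 ≤ u₀ x)
    (hu₀ne : ∃ x ∈ Set.Icc l₁ l₂, u₀ x ≠ 0)
    -- ū, u̲ ∈ C¹([0,T]×[l₁,l₂])
    (hubar : ContDiffOn ℝ 1 (fun p : ℝ × ℝ => ubar p.1 p.2) (Set.Icc 0 T ×ˢ Set.Icc l₁ l₂))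
    (hulow : ContDiffOn ℝ 1 (fun p : ℝ × ℝ => ulow p.1 p.2) (Set.Icc 0 T ×ˢ Set.Icc l₁ l₂))
    -- upper solution inequality
    (hup : ∀ t ∈ Set.Ioo 0 T, ∀ x ∈ Set.Ioo l₁ l₂,
      deriv (fun s => ubar s x) t ≥
        d * (∫ y in Set.Ioo l₁ l₂, J (x - y) * (ubar t y - ubar t x))
          - q * deriv (fun y => ubar t y) x + f t x (ubar t x))
    -- lower solution inequality
    (hlow : ∀ t ∈ Set.Ioo 0 T, ∀ x ∈ Set.Ioo l₁ l₂,
      deriv (fun s => ulow s x) t ≤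
        d * (∫ y in Set.Ioo l₁ l₂, J (x - y) * (ulow t y - ulow t x))
          - q * deriv (fun y => ulow t y) x + f t x (ulow t x))
    -- boundary conditions
    (hbd : ∀ t ∈ Set.Ioo 0 T, ulow t l₁ ≤ 0 ∧ 0 ≤ ubar t l₁)
    -- initial ordering
    (hinit : ∀ x ∈ Set.Icc l₁ l₂, ulow 0 x ≤ u₀ x ∧ u₀ x ≤ ubar 0 x) :
    ∀ t ∈ Set.Ioo 0 T, ∀ x ∈ Set.Ioo l₁ l₂, ulow t x ≤ ubar t x :=
  neumann_comparison_principle_general l₁ l₂ d q T J f ubar ulow u₀ hl hd hq hT hJc hJnn hJbdd hfc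
    hflip hubar hulow hup hlow hbd hinit
end

section
/- Assume conditions (J) and (J1) and let h be a KPP nonlinearity. Then every nontrivial solution U of the Neumann stationary problem d∫_Ω J(x−y)(U(y) − U(x))dy − q U'(x) + U(x)h(x,U(x)) = 0 on Ω with U(l₁) = 0 satisfies U ∈ C¹([l₁,l₂]) and U(x) > 0 for every x ∈ (l₁,l₂]. -/
/-!
Solving the equation for `U'` expresses it through a function that is continuous on all of
`[l₁,l₂]` (the nonlocal term is a parametric integral of a continuous integrand), so `U'` extends
continuously to the endpoints and `U ∈ C¹([l₁,l₂])`.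

If `U(x₀) = 0` for some `x₀ ∈ (l₁,l₂]`, then `x₀` is a minimum of `U ≥ 0`, so `U'(x₀) ≤ 0` and the
equation leaves `d ∫ J(x₀ - y) U(y) dy ≤ 0`. Hence `U` vanishes wherever `J(x₀ - ·) > 0`, in
particular near `x₀` because `J(0) > 0`. The zero set of `U` in `Ω` is therefore open and closed,
and connectedness of `Ω` together with `U ≢ 0` gives `U > 0` on `Ω`; a zero at `l₂` would produce
zeros inside `Ω`.
-/

open MeasureTheory

/-- `U` is a nontrivial solution of the Neumann stationary problem
`d∫_Ω J(x−y)(U(y) − U(x))dy − q U'(x) + U(x)h(x,U(x)) = 0` on `Ω` with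
`U(l₁) = 0`: bounded, continuous, nonnegative on `[l₁,l₂]`, differentiable
on `Ω`, and not identically zero. -/
def NeumannStatSol (l₁ l₂ d q : ℝ) (J : ℝ → ℝ) (h : ℝ → ℝ → ℝ) (U : ℝ → ℝ) : Prop :=
  ContinuousOn U (Set.Icc l₁ l₂) ∧
  (∃ C, ∀ x ∈ Set.Icc l₁ l₂, |U x| ≤ C) ∧
  (∀ x ∈ Set.Icc l₁ l₂, 0 ≤ U x) ∧
  (∀ x ∈ Set.Ioo l₁ l₂, DifferentiableAt ℝ U x) ∧
  (∃ x ∈ Set.Icc l₁ l₂, U x ≠ 0) ∧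
  U l₁ = 0 ∧
  ∀ x ∈ Set.Ioo l₁ l₂,
    d * (∫ y in Set.Ioo l₁ l₂, J (x - y) * (U y - U x)) - q * deriv U x
      + U x * h x (U x) = 0

open Set Filter Topology

theorem IsOpen.setIntegral_pos_of_continuousOn {X : Type*} [TopologicalSpace X]
    [MeasurableSpace X] [OpensMeasurableSpace X] {μ : Measure X} [μ.IsOpenPosMeasure]
    {s : Set X} {g : X → ℝ} (hs : IsOpen s) (hg : ContinuousOn g s) (hgi : IntegrableOn g s μ)
    (hg0 : ∀ x ∈ s, 0 ≤ g x) {z : X} (hz : z ∈ s) (hgz : 0 < g z) :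
    0 < ∫ x in s, g x ∂μ := by
  have hae : 0 ≤ᵐ[μ.restrict s] g := by
    filter_upwards [ae_restrict_mem hs.measurableSet] with x hx using hg0 x hx
  rw [setIntegral_pos_iff_support_of_nonneg_ae hae hgi]
  have hpos : IsOpen (s ∩ g ⁻¹' Ioi 0) := hg.isOpen_inter_preimage hs isOpen_Ioi
  refine (hpos.measure_pos μ ⟨z, hz, hgz⟩).trans_le (measure_mono ?_)
  exact fun x ⟨hx, hgx⟩ => ⟨(ne_of_lt hgx).symm, hx⟩

theorem IsPreconnected.eqOn_zero_of_eventually_eq_zero {X : Type*} [TopologicalSpace X]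
    {s : Set X} {f : X → ℝ} (hs : IsPreconnected s) (hso : IsOpen s) (hf : ContinuousOn f s)
    (hprop : ∀ x ∈ s, f x = 0 → ∀ᶠ y in 𝓝 x, f y = 0) {x₀ : X} (hx₀ : x₀ ∈ s)
    (hfx₀ : f x₀ = 0) : EqOn f 0 s := by
  intro x hx
  by_contra hfx
  have hzero : IsOpen (s ∩ f ⁻¹' {0}) := isOpen_iff_mem_nhds.2 fun y ⟨hy, hfy⟩ =>
    inter_mem (hso.mem_nhds hy) (hprop y hy hfy)
  have hnonzero : IsOpen (s ∩ f ⁻¹' {0}ᶜ) :=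
    hf.isOpen_inter_preimage hso isOpen_compl_singleton
  obtain ⟨y, -, ⟨-, hfy⟩, -, hfy'⟩ := hs _ _ hzero hnonzero
    (fun y hy => (em (f y = 0)).imp (⟨hy, ·⟩) (⟨hy, ·⟩))
    ⟨x₀, hx₀, hx₀, hfx₀⟩ ⟨x, hx, hx, hfx⟩
  exact hfy' hfy

theorem continuousOn_setIntegral_of_continuousOn_prod {X Y : Type*} [TopologicalSpace X]
    [FirstCountableTopology X] [TopologicalSpace Y] [T2Space Y] [MeasurableSpace Y]
    [OpensMeasurableSpace Y] {μ : Measure Y} [IsFiniteMeasureOnCompacts μ]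
    {f : X → Y → ℝ} {s : Set X} {k : Set Y} (hs : IsCompact s) (hk : IsCompact k)
    (hf : ContinuousOn (Function.uncurry f) (s ×ˢ k)) :
    ContinuousOn (fun x => ∫ y in k, f x y ∂μ) s := by
  obtain ⟨M, hM⟩ := (hs.prod hk).exists_bound_of_continuousOn hf
  have hfx : ∀ x ∈ s, ContinuousOn (f x) k := fun x hx =>
    hf.comp (continuousOn_const.prodMk continuousOn_id) fun y hy => ⟨hx, hy⟩
  refine continuousOn_of_dominated (bound := fun _ => M)
    (fun x hx => (hfx x hx).aestronglyMeasurable hk.measurableSet)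
    (fun x hx => ?_) (integrableOn_const hk.measure_ne_top) ?_
  · filter_upwards [ae_restrict_mem hk.measurableSet] with y hy using hM (x, y) ⟨hx, hy⟩
  · filter_upwards [ae_restrict_mem hk.measurableSet] with y hy
    exact hf.comp (continuousOn_id.prodMk continuousOn_const) fun x hx => ⟨hx, hy⟩

theorem hasDerivWithinAt_Icc_of_eqOn_deriv {a b : ℝ} {f f' : ℝ → ℝ} (hab : a < b)
    (hf : ContinuousOn f (Icc a b)) (hfd : DifferentiableOn ℝ f (Ioo a b))
    (hf' : ContinuousOn f' (Icc a b)) (hderiv : EqOn (deriv f) f' (Ioo a b)) :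
    ∀ x ∈ Icc a b, HasDerivWithinAt f (f' x) (Icc a b) x := by
  intro x hx
  rw [hasDerivWithinAt_iff_hasFDerivWithinAt, ← closure_Ioo hab.ne]
  refine hasFDerivWithinAt_closure_of_tendsto_fderiv hfd (convex_Ioo a b) isOpen_Ioo
    (fun y hy => (hf y ((closure_Ioo hab.ne).subset hy)).mono Ioo_subset_Icc_self) ?_
  have hlim : Tendsto f' (𝓝[Ioo a b] x) (𝓝 (f' x)) :=
    (hf' x hx).mono_left (nhdsWithin_mono _ Ioo_subset_Icc_self)
  refine ((ContinuousLinearMap.smulRightL ℝ ℝ ℝ 1).continuous.tendsto _ |>.comp hlim).congr' ?_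
  filter_upwards [self_mem_nhdsWithin] with y hy
  rw [Function.comp_apply, ← hderiv hy]
  exact ((hfd y hy).differentiableAt (isOpen_Ioo.mem_nhds hy)).hasDerivAt.hasFDerivAt.fderiv.symm
theorem contDiffOn_one_of_hasDerivWithinAt {s : Set ℝ} {f f' : ℝ → ℝ} (hs : UniqueDiffOn ℝ s)
    (hf : ∀ x ∈ s, HasDerivWithinAt f (f' x) s x) (hf' : ContinuousOn f' s) :
    ContDiffOn ℝ 1 f s :=
  (contDiffOn_one_iff_derivWithin hs).2
    ⟨fun x hx => (hf x hx).differentiableWithinAt,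
      hf'.congr fun x hx => (hf x hx).derivWithin (hs x hx)⟩

theorem IsMinOn.hasDerivWithinAt_Icc_nonpos {a b x f' : ℝ} {f : ℝ → ℝ}
    (hmin : IsMinOn f (Icc a b) x) (hx : x ∈ Ioc a b)
    (hf : HasDerivWithinAt f f' (Icc a b) x) : f' ≤ 0 := by
  have hcone : a - x ∈ posTangentConeAt (Icc a b) x :=
    sub_mem_posTangentConeAt_of_segment_subset <| by
      rw [segment_symm, segment_eq_Icc hx.1.le]
      exact Icc_subset_Icc_right hx.2
  have key : 0 ≤ (a - x) * f' := by
    simpa using hmin.localize.hasFDerivWithinAt_nonneg hf hcone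
  nlinarith [hx.1]

theorem Continuous.eventually_pos_apply_sub {J : ℝ → ℝ} (hJ : Continuous J) (hJ0 : 0 < J 0)
    (x : ℝ) : ∀ᶠ y in 𝓝 x, 0 < J (x - y) := by
  have hsub : Tendsto (fun y => x - y) (𝓝 x) (𝓝 0) := by
    simpa using (tendsto_const_nhds (x := x)).sub (tendsto_id (x := 𝓝 x))
  exact ((hJ.tendsto 0).comp hsub).eventually_const_lt hJ0

noncomputable def stationaryDeriv (l₁ l₂ d q : ℝ) (J : ℝ → ℝ) (h : ℝ → ℝ → ℝ) (U : ℝ → ℝ)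
    (x : ℝ) : ℝ :=
  (d * (∫ y in Ioo l₁ l₂, J (x - y) * (U y - U x)) + U x * h x (U x)) / q

section StationaryProblem

variable {l₁ l₂ d q : ℝ} {J : ℝ → ℝ} {h : ℝ → ℝ → ℝ} {U : ℝ → ℝ}

theorem continuousOn_stationaryDeriv (hJ : Continuous J)
    (hh : ContinuousOn (fun p : ℝ × ℝ => h p.1 p.2) (Icc l₁ l₂ ×ˢ Ici 0))
    (hU : ContinuousOn U (Icc l₁ l₂)) (hU0 : ∀ x ∈ Icc l₁ l₂, 0 ≤ U x) :
    ContinuousOn (stationaryDeriv l₁ l₂ d q J h U) (Icc l₁ l₂) := by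
  have hkernel : ContinuousOn (fun x => ∫ y in Ioo l₁ l₂, J (x - y) * (U y - U x))
      (Icc l₁ l₂) := by
    simp_rw [← integral_Icc_eq_integral_Ioo]
    refine continuousOn_setIntegral_of_continuousOn_prod isCompact_Icc isCompact_Icc ?_
    exact (hJ.comp_continuousOn (continuous_fst.sub continuous_snd).continuousOn).mul
      ((hU.comp continuousOn_snd fun p hp => hp.2).sub (hU.comp continuousOn_fst fun p hp => hp.1))
  have hreaction : ContinuousOn (fun x => h x (U x)) (Icc l₁ l₂) :=
    hh.comp (continuousOn_id.prodMk hU) fun x hx => ⟨hx, hU0 x hx⟩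
  exact ((continuousOn_const.mul hkernel).add (hU.mul hreaction)).div_const q

namespace NeumannStatSol

theorem deriv_eqOn (hU : NeumannStatSol l₁ l₂ d q J h U) (hq : q ≠ 0) :
    EqOn (deriv U) (stationaryDeriv l₁ l₂ d q J h U) (Ioo l₁ l₂) := by
  intro x hx
  have heq := hU.2.2.2.2.2.2 x hx
  rw [stationaryDeriv, eq_div_iff hq]
  linarith

theorem hasDerivWithinAt (hU : NeumannStatSol l₁ l₂ d q J h U) (hl : l₁ < l₂) (hq : q ≠ 0)
    (hJ : Continuous J) (hh : ContinuousOn (fun p : ℝ × ℝ => h p.1 p.2) (Icc l₁ l₂ ×ˢ Ici 0)) :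
    ∀ x ∈ Icc l₁ l₂, HasDerivWithinAt U (stationaryDeriv l₁ l₂ d q J h U x) (Icc l₁ l₂) x :=
  hasDerivWithinAt_Icc_of_eqOn_deriv hl hU.1
    (fun x hx => (hU.2.2.2.1 x hx).differentiableWithinAt)
    (continuousOn_stationaryDeriv hJ hh hU.1 hU.2.2.1) (hU.deriv_eqOn hq)

theorem eq_zero_of_eq_zero_of_kernel_pos (hU : NeumannStatSol l₁ l₂ d q J h U)
    (hl : l₁ < l₂) (hd : 0 < d) (hq : 0 < q) (hJ : Continuous J) (hJnn : ∀ x, 0 ≤ J x)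
    (hh : ContinuousOn (fun p : ℝ × ℝ => h p.1 p.2) (Icc l₁ l₂ ×ˢ Ici 0))
    {x₀ z : ℝ} (hx₀ : x₀ ∈ Ioc l₁ l₂) (hUx₀ : U x₀ = 0) (hz : z ∈ Ioo l₁ l₂)
    (hJz : 0 < J (x₀ - z)) : U z = 0 := by
  have hmin : IsMinOn U (Icc l₁ l₂) x₀ := fun x hx => by
    simpa [hUx₀] using hU.2.2.1 x hx
  have hderiv_nonpos := hmin.hasDerivWithinAt_Icc_nonpos hx₀
    (hU.hasDerivWithinAt hl hq.ne' hJ hh x₀ (Ioc_subset_Icc_self hx₀))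
  simp only [stationaryDeriv, hUx₀, sub_zero, zero_mul, add_zero] at hderiv_nonpos
  by_contra hUz
  have hcont : ContinuousOn (fun y => J (x₀ - y) * U y) (Icc l₁ l₂) :=
    (hJ.comp (continuous_const.sub continuous_id)).continuousOn.mul hU.1
  have hint_pos : 0 < ∫ y in Ioo l₁ l₂, J (x₀ - y) * U y :=
    isOpen_Ioo.setIntegral_pos_of_continuousOn (hcont.mono Ioo_subset_Icc_self)
      ((hcont.integrableOn_compact isCompact_Icc).mono_set Ioo_subset_Icc_self)
      (fun y hy => mul_nonneg (hJnn _) (hU.2.2.1 y (Ioo_subset_Icc_self hy))) hz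
      (mul_pos hJz ((hU.2.2.1 z (Ioo_subset_Icc_self hz)).lt_of_ne' hUz))
  exact hderiv_nonpos.not_gt (div_pos (mul_pos hd hint_pos) hq)

theorem pos_of_mem_Ioo (hU : NeumannStatSol l₁ l₂ d q J h U)
    (hl : l₁ < l₂) (hd : 0 < d) (hq : 0 < q) (hJ : Continuous J) (hJnn : ∀ x, 0 ≤ J x)
    (hJ0 : 0 < J 0) (hh : ContinuousOn (fun p : ℝ × ℝ => h p.1 p.2) (Icc l₁ l₂ ×ˢ Ici 0)) :
    ∀ x ∈ Ioo l₁ l₂, 0 < U x := by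
  by_contra! ⟨x₀, hx₀, hUx₀⟩
  have hzero : EqOn U 0 (Ioo l₁ l₂) := by
    refine isPreconnected_Ioo.eqOn_zero_of_eventually_eq_zero isOpen_Ioo
      (hU.1.mono Ioo_subset_Icc_self) (fun x hx hUx => ?_) hx₀
      (le_antisymm hUx₀ (hU.2.2.1 x₀ (Ioo_subset_Icc_self hx₀)))
    filter_upwards [hJ.eventually_pos_apply_sub hJ0 x, isOpen_Ioo.mem_nhds hx] with y hJy hy
    exact hU.eq_zero_of_eq_zero_of_kernel_pos hl hd hq hJ hJnn hh (Ioo_subset_Ioc_self hx) hUx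
      hy hJy
  have hzero' : EqOn U 0 (Icc l₁ l₂) := hzero.of_subset_closure hU.1 continuousOn_const
    Ioo_subset_Icc_self (closure_Ioo hl.ne).symm.subset
  obtain ⟨w, hw, hUw⟩ := hU.2.2.2.2.1
  exact hUw (hzero' hw)

theorem pos_of_mem_Ioc (hU : NeumannStatSol l₁ l₂ d q J h U)
    (hl : l₁ < l₂) (hd : 0 < d) (hq : 0 < q) (hJ : Continuous J) (hJnn : ∀ x, 0 ≤ J x)
    (hJ0 : 0 < J 0) (hh : ContinuousOn (fun p : ℝ × ℝ => h p.1 p.2) (Icc l₁ l₂ ×ˢ Ici 0)) :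
    ∀ x ∈ Ioc l₁ l₂, 0 < U x := by
  intro x hx
  refine (hU.2.2.1 x (Ioc_subset_Icc_self hx)).lt_of_ne' fun hUx => ?_
  obtain ⟨z, hJz, hz⟩ := ((hJ.eventually_pos_apply_sub hJ0 x).filter_mono nhdsWithin_le_nhds
    |>.and (Ioo_mem_nhdsLT hx.1)).exists
  have hz' : z ∈ Ioo l₁ l₂ := ⟨hz.1, hz.2.trans_le hx.2⟩
  exact (hU.pos_of_mem_Ioo hl hd hq hJ hJnn hJ0 hh z hz').ne'
    (hU.eq_zero_of_eq_zero_of_kernel_pos hl hd hq hJ hJnn hh hx hUx hz' hJz)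

end NeumannStatSol

end StationaryProblem

theorem neumann_stationary_regularity_positivity_general
    (l₁ l₂ d q : ℝ) (J : ℝ → ℝ) (h : ℝ → ℝ → ℝ)
    (hl : l₁ < l₂) (hd : 0 < d) (hq : 0 < q)
    -- condition (J)
    (hJc : Continuous J) (hJnn : ∀ x, 0 ≤ J x) (hJ0 : 0 < J 0)
    -- KPP nonlinearity
    (hhC1 : ContDiffOn ℝ 1 (fun p : ℝ × ℝ => h p.1 p.2) (Set.Icc l₁ l₂ ×ˢ Set.Ici 0)) :
    ∀ U, NeumannStatSol l₁ l₂ d q J h U →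
      ContDiffOn ℝ 1 U (Set.Icc l₁ l₂) ∧ ∀ x ∈ Set.Ioc l₁ l₂, 0 < U x := by
  intro U hU
  have hh := hhC1.continuousOn
  exact ⟨contDiffOn_one_of_hasDerivWithinAt (uniqueDiffOn_Icc hl)
      (hU.hasDerivWithinAt hl hq.ne' hJc hh) (continuousOn_stationaryDeriv hJc hh hU.1 hU.2.2.1),
    hU.pos_of_mem_Ioc hl hd hq hJc hJnn hJ0 hh⟩

/-- **Regularity and positivity of nontrivial stationary solutions (Neumann
case).** Every nontrivial solution `U` of the Neumann stationary problem
satisfies `U ∈ C¹([l₁,l₂])` and `U > 0` on `(l₁,l₂]`. -/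
theorem neumann_stationary_regularity_positivity
    (l₁ l₂ d q : ℝ) (J : ℝ → ℝ) (h : ℝ → ℝ → ℝ)
    (hl : l₁ < l₂) (hd : 0 < d) (hq : 0 < q)
    -- condition (J)
    (hJc : Continuous J) (hJnn : ∀ x, 0 ≤ J x) (hJ0 : 0 < J 0)
    (hJint : MeasureTheory.Integrable J) (hJ1 : (∫ x, J x) = 1)
    -- condition (J1)
    (hJsymm : ∀ x, J (-x) = J x) (hJbdd : ∃ C, ∀ x, J x ≤ C)
    -- KPP nonlinearity
    (hhC1 : ContDiffOn ℝ 1 (fun p : ℝ × ℝ => h p.1 p.2) (Set.Icc l₁ l₂ ×ˢ Set.Ici 0))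
    (hhdec : ∀ x ∈ Set.Icc l₁ l₂, StrictAntiOn (fun u => h x u) (Set.Ici 0))
    (hhN : ∃ N > 0, ∀ x ∈ Set.Icc l₁ l₂, ∀ u > N, h x u < 0) :
    ∀ U, NeumannStatSol l₁ l₂ d q J h U →
      ContDiffOn ℝ 1 U (Set.Icc l₁ l₂) ∧ ∀ x ∈ Set.Ioc l₁ l₂, 0 < U x :=
  neumann_stationary_regularity_positivity_general l₁ l₂ d q J h hl hd hq hJc hJnn hJ0 hhC1
end
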